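/- arXiv:1403.6292 — 9 statements merged into one kernel-verified Lean document; each statement's English description precedes it below -/
import Mathlib

section
/- Let 0 < q < 1, p > 1, and α < (p-1)/p. For every nonnegative function f on (0,∞), the inequality ∑_{j∈ℤ} q^{j(p(α-1)+1)} (∑_{i=j}^∞ q^{i(1-α)} f(q^i))^p ≤ (1-q)^{-p} (1 - q^{(p-1)/p - α})^{-p} ∑_{i∈ℤ} q^i f(q^i)^p holds. -/
open scoped ENNReal

open MeasureTheory in
private lemma holder_tsum (a b : ℕ → ℝ≥0∞) {p r : ℝ} (hpr : p.HolderConjugate r) :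
    ∑' n, a n * b n ≤ (∑' n, a n ^ p) ^ (1 / p) * (∑' n, b n ^ r) ^ (1 / r) := by
  simpa [lintegral_count] using
    ENNReal.lintegral_mul_le_Lp_mul_Lq (Measure.count : Measure ℕ) hpr
      (measurable_of_countable a).aemeasurable (measurable_of_countable b).aemeasurable

theorem q_hardy_series (q p α : ℝ) (hq : 0 < q) (hq1 : q < 1) (hp : 1 < p)
    (hα : α < (p - 1) / p) (f : ℝ → ℝ≥0∞) :
    ∑' j : ℤ, (ENNReal.ofReal q) ^ ((j : ℝ) * (p * (α - 1) + 1)) *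
        (∑' m : ℕ, (ENNReal.ofReal q) ^ (((j : ℝ) + (m : ℝ)) * (1 - α)) *
          f (q ^ ((j : ℝ) + (m : ℝ)))) ^ p
      ≤ ENNReal.ofReal (((1 - q) * (1 - q ^ ((p - 1) / p - α))) ^ (-p)) *
        ∑' i : ℤ, (ENNReal.ofReal q) ^ (i : ℝ) * (f (q ^ (i : ℝ))) ^ p := by
  have hp0 : (0:ℝ) < p := lt_trans one_pos hp
  have hp1 : (0:ℝ) < p - 1 := by linarith
  set β : ℝ := (p - 1) / p - α with hβdef
  have hβ : 0 < β := sub_pos.2 hα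
  set Q : ℝ≥0∞ := ENNReal.ofReal q with hQdef
  have hQ0 : Q ≠ 0 := (ENNReal.ofReal_pos.mpr hq).ne'
  have hQt : Q ≠ ⊤ := ENNReal.ofReal_ne_top
  set r : ℝ := Real.conjExponent p with hrdef
  have hpr : p.HolderConjugate r := Real.HolderConjugate.conjExponent hp
  have hr0 : r ≠ 0 := hpr.symm.ne_zero
  have hrval : r = p / (p - 1) := rfl
  have h1r : 1 / r * p = p - 1 := by
    rw [hrval]; field_simp
  have hsum : ∀ x : ℝ, x * ((β + 1)/p) + x * (β/r) = x * (1 - α) := by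
    intro x; rw [hβdef, hrval]; field_simp; ring
  have hexp : (p * (α - 1) + 1) + β * (p - 1) = -β := by
    rw [hβdef]; field_simp; ring
  have hgeo : ∑' n : ℕ, (Q ^ β) ^ n = (1 - Q ^ β)⁻¹ := ENNReal.tsum_geometric _
  set W : ℝ≥0∞ := ((1 - Q ^ β)⁻¹) ^ (p - 1) with hWdef
  have key : ∀ j : ℤ, Q ^ ((j : ℝ) * (p * (α - 1) + 1)) *
      (∑' m : ℕ, Q ^ (((j : ℝ) + (m : ℝ)) * (1 - α)) * f (q ^ ((j : ℝ) + (m : ℝ)))) ^ p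
      ≤ W * ∑' m : ℕ, (Q ^ β) ^ m * (Q ^ ((j : ℝ) + (m : ℝ)) * f (q ^ ((j : ℝ) + (m : ℝ))) ^ p) := by
    intro j
    set A : ℝ≥0∞ := ∑' m : ℕ, Q ^ (((j : ℝ) + (m : ℝ)) * β) with hAdef
    set B : ℝ≥0∞ := ∑' m : ℕ, Q ^ (((j : ℝ) + (m : ℝ)) * (β + 1)) * f (q ^ ((j : ℝ) + (m : ℝ))) ^ p
      with hBdef
    have hS : (∑' m : ℕ, Q ^ (((j : ℝ) + (m : ℝ)) * (1 - α)) * f (q ^ ((j : ℝ) + (m : ℝ))))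
        ≤ B ^ (1/p) * A ^ (1/r) := by
      have h := holder_tsum
        (fun m : ℕ => Q ^ (((j : ℝ) + (m : ℝ)) * ((β + 1)/p)) * f (q ^ ((j : ℝ) + (m : ℝ))))
        (fun m : ℕ => Q ^ (((j : ℝ) + (m : ℝ)) * (β/r))) hpr
      have e1 : ∀ m : ℕ, Q ^ (((j : ℝ) + (m : ℝ)) * (1 - α)) * f (q ^ ((j : ℝ) + (m : ℝ)))
          = (Q ^ (((j : ℝ) + (m : ℝ)) * ((β + 1)/p)) * f (q ^ ((j : ℝ) + (m : ℝ))))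
            * Q ^ (((j : ℝ) + (m : ℝ)) * (β/r)) := by
        intro m
        rw [mul_right_comm, ← ENNReal.rpow_add _ _ hQ0 hQt, hsum]
      have e2 : ∀ m : ℕ, (Q ^ (((j : ℝ) + (m : ℝ)) * ((β + 1)/p)) * f (q ^ ((j : ℝ) + (m : ℝ)))) ^ p
          = Q ^ (((j : ℝ) + (m : ℝ)) * (β + 1)) * f (q ^ ((j : ℝ) + (m : ℝ))) ^ p := by
        intro m
        rw [ENNReal.mul_rpow_of_nonneg _ _ hp0.le, ← ENNReal.rpow_mul, mul_assoc,
          div_mul_cancel₀ _ hp0.ne']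
      have e3 : ∀ m : ℕ, (Q ^ (((j : ℝ) + (m : ℝ)) * (β/r))) ^ r
          = Q ^ (((j : ℝ) + (m : ℝ)) * β) := by
        intro m
        rw [← ENNReal.rpow_mul, mul_assoc, div_mul_cancel₀ _ hr0]
      calc (∑' m : ℕ, Q ^ (((j : ℝ) + (m : ℝ)) * (1 - α)) * f (q ^ ((j : ℝ) + (m : ℝ))))
          = ∑' m : ℕ, (Q ^ (((j : ℝ) + (m : ℝ)) * ((β + 1)/p)) * f (q ^ ((j : ℝ) + (m : ℝ))))
              * Q ^ (((j : ℝ) + (m : ℝ)) * (β/r)) := tsum_congr e1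
        _ ≤ (∑' m : ℕ, (Q ^ (((j : ℝ) + (m : ℝ)) * ((β + 1)/p)) * f (q ^ ((j : ℝ) + (m : ℝ)))) ^ p)
              ^ (1/p)
            * (∑' m : ℕ, (Q ^ (((j : ℝ) + (m : ℝ)) * (β/r))) ^ r) ^ (1/r) := h
        _ = B ^ (1/p) * A ^ (1/r) := by rw [tsum_congr e2, tsum_congr e3]
    have hA : A = Q ^ ((j : ℝ) * β) * (1 - Q ^ β)⁻¹ := by
      rw [hAdef, ← hgeo, ← ENNReal.tsum_mul_left]
      refine tsum_congr fun m => ?_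
      have e : ((j : ℝ) + (m : ℝ)) * β = (j : ℝ) * β + β * (m : ℝ) := by ring
      rw [e, ENNReal.rpow_add _ _ hQ0 hQt]
      congr 1
      rw [← ENNReal.rpow_natCast (Q ^ β) m, ← ENNReal.rpow_mul]
    have step1 : (∑' m : ℕ, Q ^ (((j : ℝ) + (m : ℝ)) * (1 - α)) * f (q ^ ((j : ℝ) + (m : ℝ)))) ^ p
        ≤ B * (Q ^ ((j : ℝ) * β)) ^ (p - 1) * W := by
      refine le_trans (ENNReal.rpow_le_rpow hS hp0.le) (le_of_eq ?_)
      rw [ENNReal.mul_rpow_of_nonneg _ _ hp0.le, ← ENNReal.rpow_mul, ← ENNReal.rpow_mul,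
        one_div_mul_cancel hp0.ne', ENNReal.rpow_one, h1r, hA,
        ENNReal.mul_rpow_of_nonneg _ _ hp1.le, hWdef, mul_assoc]
    have ej : (j : ℝ) * (p * (α - 1) + 1) + (j : ℝ) * β * (p - 1) = -((j : ℝ) * β) := by
      linear_combination (j : ℝ) * hexp
    have hQQ : Q ^ ((j : ℝ) * (p * (α - 1) + 1)) * Q ^ ((j : ℝ) * β * (p - 1))
        = Q ^ (-((j : ℝ) * β)) := by
      rw [← ENNReal.rpow_add _ _ hQ0 hQt, ej]
    calc Q ^ ((j : ℝ) * (p * (α - 1) + 1)) *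
        (∑' m : ℕ, Q ^ (((j : ℝ) + (m : ℝ)) * (1 - α)) * f (q ^ ((j : ℝ) + (m : ℝ)))) ^ p
        ≤ Q ^ ((j : ℝ) * (p * (α - 1) + 1)) * (B * (Q ^ ((j : ℝ) * β)) ^ (p - 1) * W) :=
          mul_le_mul_right step1 _
      _ = W * (Q ^ (-((j : ℝ) * β)) * B) := by
          rw [← ENNReal.rpow_mul, ← hQQ]; ring
      _ = W * ∑' m : ℕ, (Q ^ β) ^ m * (Q ^ ((j : ℝ) + (m : ℝ)) * f (q ^ ((j : ℝ) + (m : ℝ))) ^ p) := by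
          rw [hBdef]
          congr 1
          rw [← ENNReal.tsum_mul_left]
          refine tsum_congr fun m => ?_
          have e : -((j : ℝ) * β) + ((j : ℝ) + (m : ℝ)) * (β + 1)
              = β * (m : ℝ) + ((j : ℝ) + (m : ℝ)) := by ring
          rw [← mul_assoc, ← ENNReal.rpow_add _ _ hQ0 hQt, e, ENNReal.rpow_add _ _ hQ0 hQt,
            ENNReal.rpow_mul, ENNReal.rpow_natCast, mul_assoc]
  have houter : (∑' j : ℤ, Q ^ ((j : ℝ) * (p * (α - 1) + 1)) *
      (∑' m : ℕ, Q ^ (((j : ℝ) + (m : ℝ)) * (1 - α)) * f (q ^ ((j : ℝ) + (m : ℝ)))) ^ p)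
      ≤ W * ((1 - Q ^ β)⁻¹ * ∑' i : ℤ, Q ^ (i : ℝ) * f (q ^ (i : ℝ)) ^ p) := by
    calc (∑' j : ℤ, Q ^ ((j : ℝ) * (p * (α - 1) + 1)) *
        (∑' m : ℕ, Q ^ (((j : ℝ) + (m : ℝ)) * (1 - α)) * f (q ^ ((j : ℝ) + (m : ℝ)))) ^ p)
        ≤ ∑' j : ℤ, W * ∑' m : ℕ, (Q ^ β) ^ m *
            (Q ^ ((j : ℝ) + (m : ℝ)) * f (q ^ ((j : ℝ) + (m : ℝ))) ^ p) :=
          ENNReal.tsum_le_tsum key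
      _ = W * ∑' j : ℤ, ∑' m : ℕ, (Q ^ β) ^ m *
            (Q ^ ((j : ℝ) + (m : ℝ)) * f (q ^ ((j : ℝ) + (m : ℝ))) ^ p) := ENNReal.tsum_mul_left
      _ = W * ∑' m : ℕ, ∑' j : ℤ, (Q ^ β) ^ m *
            (Q ^ ((j : ℝ) + (m : ℝ)) * f (q ^ ((j : ℝ) + (m : ℝ))) ^ p) := by
          rw [ENNReal.tsum_comm]
      _ = W * ∑' m : ℕ, (Q ^ β) ^ m * ∑' i : ℤ, Q ^ (i : ℝ) * f (q ^ (i : ℝ)) ^ p := by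
          congr 1
          refine tsum_congr fun m => ?_
          rw [ENNReal.tsum_mul_left]
          congr 1
          have h := (Equiv.addRight (m : ℤ)).tsum_eq
            (fun i : ℤ => Q ^ (i : ℝ) * f (q ^ (i : ℝ)) ^ p)
          rw [← h]
          refine tsum_congr fun i => ?_
          simp only [Equiv.coe_addRight]
          push_cast
          ring_nf
      _ = W * ((1 - Q ^ β)⁻¹ * ∑' i : ℤ, Q ^ (i : ℝ) * f (q ^ (i : ℝ)) ^ p) := by
          rw [ENNReal.tsum_mul_right, hgeo]
  have hqβ : q ^ β < 1 := Real.rpow_lt_one hq.le hq1 hβ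
  have hc0 : (0:ℝ) < 1 - q ^ β := by linarith
  have h1 : (1 : ℝ≥0∞) - Q ^ β = ENNReal.ofReal (1 - q ^ β) := by
    rw [hQdef, ENNReal.ofReal_rpow_of_pos hq,
      ENNReal.ofReal_sub _ (Real.rpow_nonneg hq.le β), ENNReal.ofReal_one]
  have hx0 : ENNReal.ofReal (1 - q ^ β) ≠ 0 := (ENNReal.ofReal_pos.mpr hc0).ne'
  have hconst : W * (1 - Q ^ β)⁻¹ ≤ ENNReal.ofReal (((1 - q) * (1 - q ^ β)) ^ (-p)) := by
    rw [hWdef, h1]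
    have h2 : (ENNReal.ofReal (1 - q ^ β))⁻¹ ^ (p - 1) * (ENNReal.ofReal (1 - q ^ β))⁻¹
        = ENNReal.ofReal ((1 - q ^ β) ^ (-p)) := by
      rw [ENNReal.inv_rpow, ← ENNReal.rpow_neg, ← ENNReal.rpow_neg_one
          (ENNReal.ofReal (1 - q ^ β)), ← ENNReal.rpow_add _ _ hx0 ENNReal.ofReal_ne_top]
      have e4 : -(p - 1) + -1 = -p := by ring
      rw [e4, ENNReal.ofReal_rpow_of_pos hc0]
    rw [h2]
    refine ENNReal.ofReal_le_ofReal ?_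
    refine Real.rpow_le_rpow_of_nonpos (by nlinarith) ?_ (by linarith)
    exact mul_le_of_le_one_left hc0.le (by linarith)
  refine le_trans houter ?_
  rw [← mul_assoc]
  exact mul_le_mul_left hconst _
end

section
/- Let 0 < q < 1, λ > 0, and p > 1. For every sequence (a_n)_{n∈ℤ} of nonnegative reals, ∑_{n∈ℤ} (q^{-λn} ∑_{k=n}^∞ q^{λk} a_k)^p ≤ (1-q^λ)^{-p} ∑_{n∈ℤ} a_n^p. -/
open scoped ENNReal

/-- Hölder step: for `0 < r < 1`,
`(∑ r^m f m)^p ≤ ((1-r)⁻¹)^(p-1) * ∑ r^m (f m)^p`. -/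
lemma holder_geom (r : ℝ≥0∞) (p : ℝ) (hp : 1 < p) (hr0 : r ≠ 0) (hr1 : r < 1)
    (f : ℕ → ℝ≥0∞) :
    (∑' m : ℕ, r ^ m * f m) ^ p ≤ ((1 - r)⁻¹) ^ (p - 1) * ∑' m : ℕ, r ^ m * (f m) ^ p := by
  have hrt : r ≠ ⊤ := (hr1.trans ENNReal.one_lt_top).ne
  have hp0 : (0:ℝ) < p := lt_trans one_pos hp
  set p' : ℝ := p / (p - 1) with hp'def
  have hpq : p.HolderConjugate p' := Real.HolderConjugate.conjExponent hp
  have hp'0 : (0:ℝ) < p' := hpq.symm.pos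
  -- splitting
  have hsplit : ∀ m : ℕ, r ^ m * f m = (r ^ ((m:ℝ)/p')) * (r ^ ((m:ℝ)/p) * f m) := by
    intro m
    rw [← mul_assoc, ← ENNReal.rpow_add _ _ hr0 hrt]
    have : (m:ℝ)/p' + (m:ℝ)/p = (m:ℝ) := by
      rw [hp'def, div_div_eq_mul_div, div_add_div _ _ hp0.ne' hp0.ne']
      field_simp
      ring
    rw [this, ENNReal.rpow_natCast]
  -- Hölder
  have holder : ∑' m : ℕ, r ^ m * f m ≤
      (∑' m : ℕ, (r ^ ((m:ℝ)/p')) ^ p') ^ (1/p') *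
      (∑' m : ℕ, (r ^ ((m:ℝ)/p) * f m) ^ p) ^ (1/p) := by
    have h := ENNReal.lintegral_mul_le_Lp_mul_Lq (MeasureTheory.Measure.count (α := ℕ))
      hpq.symm (f := fun m : ℕ => r ^ ((m:ℝ)/p')) (g := fun m : ℕ => r ^ ((m:ℝ)/p) * f m)
      (measurable_from_nat.aemeasurable) (measurable_from_nat.aemeasurable)
    simp only [Pi.mul_apply, MeasureTheory.lintegral_count] at h
    calc ∑' m : ℕ, r ^ m * f m
        = ∑' m : ℕ, (r ^ ((m:ℝ)/p')) * (r ^ ((m:ℝ)/p) * f m) := by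
          exact tsum_congr hsplit
      _ ≤ _ := h
  have hfac1 : (∑' m : ℕ, (r ^ ((m:ℝ)/p')) ^ p') = (1 - r)⁻¹ := by
    rw [← ENNReal.tsum_geometric r]
    refine tsum_congr fun m => ?_
    rw [← ENNReal.rpow_mul, div_mul_cancel₀ _ hp'0.ne', ENNReal.rpow_natCast]
  have hfac2 : (∑' m : ℕ, (r ^ ((m:ℝ)/p) * f m) ^ p) = ∑' m : ℕ, r ^ m * (f m) ^ p := by
    refine tsum_congr fun m => ?_
    rw [ENNReal.mul_rpow_of_nonneg _ _ hp0.le, ← ENNReal.rpow_mul,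
      div_mul_cancel₀ _ hp0.ne', ENNReal.rpow_natCast]
  rw [hfac1, hfac2] at holder
  calc (∑' m : ℕ, r ^ m * f m) ^ p
      ≤ (((1 - r)⁻¹) ^ (1/p') * (∑' m : ℕ, r ^ m * (f m) ^ p) ^ (1/p)) ^ p :=
        ENNReal.rpow_le_rpow holder hp0.le
    _ = ((1 - r)⁻¹) ^ (p - 1) * ∑' m : ℕ, r ^ m * (f m) ^ p := by
        rw [ENNReal.mul_rpow_of_nonneg _ _ hp0.le, ← ENNReal.rpow_mul, ← ENNReal.rpow_mul,
          one_div_mul_cancel hp0.ne', ENNReal.rpow_one,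
          show 1/p' * p = p - 1 by rw [hp'def, one_div_div, div_mul_cancel₀ _ hp0.ne']]

theorem copson_Z (q l p : ℝ) (hq : 0 < q) (hq1 : q < 1) (hl : 0 < l)
    (hp : 1 < p) (a : ℤ → ℝ≥0∞) :
    ∑' n : ℤ, ((ENNReal.ofReal q) ^ (-(l * (n : ℝ))) *
        ∑' m : ℕ, (ENNReal.ofReal q) ^ (l * ((n : ℝ) + (m : ℝ))) * a (n + m)) ^ p
      ≤ ENNReal.ofReal ((1 - q ^ l) ^ (-p)) * ∑' n : ℤ, (a n) ^ p := by
  set Q : ℝ≥0∞ := ENNReal.ofReal q with hQdef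
  have hQ0 : Q ≠ 0 := (ENNReal.ofReal_pos.mpr hq).ne'
  have hQt : Q ≠ ⊤ := ENNReal.ofReal_ne_top
  set r : ℝ≥0∞ := Q ^ l with hrdef
  have hql1 : q ^ l < 1 := Real.rpow_lt_one hq.le hq1 hl
  have hql0 : 0 < q ^ l := Real.rpow_pos_of_pos hq l
  have hrval : r = ENNReal.ofReal (q ^ l) := ENNReal.ofReal_rpow_of_pos hq
  have hr0 : r ≠ 0 := by
    rw [hrval]; exact (ENNReal.ofReal_pos.mpr hql0).ne'
  have hr1 : r < 1 := by
    rw [hrval]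
    calc ENNReal.ofReal (q ^ l) < ENNReal.ofReal 1 := by
          exact ENNReal.ofReal_lt_ofReal_iff_of_nonneg hql0.le |>.mpr hql1
      _ = 1 := ENNReal.ofReal_one
  have hrt : r ≠ ⊤ := (hr1.trans ENNReal.one_lt_top).ne
  have hp0 : (0:ℝ) < p := lt_trans one_pos hp
  -- simplify inner term
  have hinner : ∀ n : ℤ, (Q ^ (-(l * (n : ℝ))) *
      ∑' m : ℕ, Q ^ (l * ((n : ℝ) + (m : ℝ))) * a (n + m))
      = ∑' m : ℕ, r ^ m * a (n + m) := by
    intro n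
    rw [← ENNReal.tsum_mul_left]
    refine tsum_congr fun m => ?_
    rw [← mul_assoc, ← ENNReal.rpow_add _ _ hQ0 hQt]
    have : -(l * (n:ℝ)) + l * ((n:ℝ) + (m:ℝ)) = l * (m:ℝ) := by ring
    rw [this, ENNReal.rpow_mul, ← hrdef, ENNReal.rpow_natCast]
  calc ∑' n : ℤ, (Q ^ (-(l * (n : ℝ))) *
        ∑' m : ℕ, Q ^ (l * ((n : ℝ) + (m : ℝ))) * a (n + m)) ^ p
      = ∑' n : ℤ, (∑' m : ℕ, r ^ m * a (n + m)) ^ p := by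
        exact tsum_congr fun n => by rw [hinner n]
    _ ≤ ∑' n : ℤ, ((1 - r)⁻¹) ^ (p - 1) * ∑' m : ℕ, r ^ m * (a (n + m)) ^ p := by
        exact ENNReal.tsum_le_tsum fun n => holder_geom r p hp hr0 hr1 _
    _ = ((1 - r)⁻¹) ^ (p - 1) * ∑' m : ℕ, ∑' n : ℤ, r ^ m * (a (n + m)) ^ p := by
        rw [ENNReal.tsum_mul_left, ENNReal.tsum_comm]
    _ = ((1 - r)⁻¹) ^ (p - 1) * ∑' m : ℕ, r ^ m * ∑' n : ℤ, (a n) ^ p := by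
        congr 1
        refine tsum_congr fun m => ?_
        rw [ENNReal.tsum_mul_left]
        congr 1
        exact (Equiv.addRight (m : ℤ)).tsum_eq (fun n => (a n) ^ p)
    _ = ((1 - r)⁻¹) ^ (p - 1) * ((1 - r)⁻¹ * ∑' n : ℤ, (a n) ^ p) := by
        rw [ENNReal.tsum_mul_right, ENNReal.tsum_geometric, mul_comm]
    _ = ENNReal.ofReal ((1 - q ^ l) ^ (-p)) * ∑' n : ℤ, (a n) ^ p := by
        rw [← mul_assoc]
        congr 1
        have h1r : (1 : ℝ≥0∞) - r = ENNReal.ofReal (1 - q ^ l) := by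
          rw [hrval, ← ENNReal.ofReal_one, ← ENNReal.ofReal_sub _ hql0.le]
        have hpos : (0:ℝ) < 1 - q ^ l := by linarith
        have hinv : ((1:ℝ≥0∞) - r)⁻¹ = ENNReal.ofReal ((1 - q ^ l)⁻¹) := by
          rw [h1r, ← ENNReal.ofReal_inv_of_pos hpos]
        have harith : (1 - q ^ l)⁻¹ ^ (p - 1) * (1 - q ^ l)⁻¹ = (1 - q ^ l) ^ (-p) := by
          rw [Real.inv_rpow hpos.le, ← Real.rpow_neg hpos.le, ← Real.rpow_neg_one (1 - q ^ l),
            ← Real.rpow_add hpos]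
          congr 1
          ring
        rw [hinv, ENNReal.ofReal_rpow_of_pos (inv_pos.mpr hpos),
          ← ENNReal.ofReal_mul (by positivity), harith]
end

section
/- Let 0 < q < 1, λ > 0, and p > 1. For every sequence (a_n)_{n≥0} of nonnegative reals, ∑_{n=0}^∞ (q^{-λn} ∑_{k=n}^∞ q^{λk} a_k)^p ≤ (1-q^λ)^{-p} ∑_{n=0}^∞ a_n^p. -/
open scoped ENNReal

/-!
With `r = q ^ λ` the inner sum is `∑ₘ rᵐ a (n + m)`. Weighted Hölder with weights `rᵐ` bounds its
`p`-th power by `(∑ₘ rᵐ) ^ (p - 1) * ∑ₘ rᵐ a (n + m) ^ p`; summing over `n`, every tail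
`∑ₙ a (n + m) ^ p` is at most `∑ₙ a n ^ p`, which leaves the constant `(∑ₘ rᵐ) ^ p = (1 - r) ^ (-p)`.
-/

namespace ENNReal

variable {ι : Type*} {p : ℝ}

lemma tsum_mul_le_weight_mul_Lp (hp : 1 ≤ p) (w f : ι → ℝ≥0∞) :
    ∑' i, w i * f i ≤ (∑' i, w i) ^ (1 - p⁻¹) * (∑' i, w i * f i ^ p) ^ p⁻¹ := by
  have hp' : 0 ≤ 1 - p⁻¹ := sub_nonneg.2 (inv_le_one_of_one_le₀ hp)
  rw [ENNReal.tsum_eq_iSup_sum]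
  refine iSup_le fun s => (inner_le_weight_mul_Lp_of_nonneg s hp w f).trans ?_
  gcongr <;> exact ENNReal.sum_le_tsum s

lemma rpow_tsum_mul_le (hp : 1 ≤ p) (w f : ι → ℝ≥0∞) :
    (∑' i, w i * f i) ^ p ≤ (∑' i, w i) ^ (p - 1) * ∑' i, w i * f i ^ p := by
  have hp0 : 0 < p := by linarith
  calc (∑' i, w i * f i) ^ p
      ≤ ((∑' i, w i) ^ (1 - p⁻¹) * (∑' i, w i * f i ^ p) ^ p⁻¹) ^ p :=
        rpow_le_rpow (tsum_mul_le_weight_mul_Lp hp w f) hp0.le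
    _ = (∑' i, w i) ^ (p - 1) * ∑' i, w i * f i ^ p := by
        rw [mul_rpow_of_nonneg _ _ hp0.le, ← rpow_mul, ← rpow_mul, inv_mul_cancel₀ hp0.ne',
          rpow_one, sub_mul, one_mul, inv_mul_cancel₀ hp0.ne']

lemma tsum_rpow_tsum_mul_add_le (hp : 1 ≤ p) (w a : ℕ → ℝ≥0∞) :
    ∑' n, (∑' m, w m * a (n + m)) ^ p ≤ (∑' m, w m) ^ p * ∑' n, a n ^ p := by
  set W := ∑' m, w m
  have tail_le (m : ℕ) : ∑' n, a (n + m) ^ p ≤ ∑' n, a n ^ p :=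
    tsum_comp_le_tsum_of_injective (add_left_injective m) (fun n => a n ^ p)
  calc ∑' n, (∑' m, w m * a (n + m)) ^ p
      ≤ ∑' n, W ^ (p - 1) * ∑' m, w m * a (n + m) ^ p :=
        ENNReal.tsum_le_tsum fun n => rpow_tsum_mul_le hp w _
    _ = W ^ (p - 1) * ∑' m, w m * ∑' n, a (n + m) ^ p := by
        rw [ENNReal.tsum_mul_left, ENNReal.tsum_comm]
        simp only [ENNReal.tsum_mul_left]
    _ ≤ W ^ (p - 1) * ∑' m, w m * ∑' n, a n ^ p := by
        gcongr W ^ (p - 1) * ∑' m, w m * ?_ with m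
        exact tail_le m
    _ = W ^ p * ∑' n, a n ^ p := by
        rw [ENNReal.tsum_mul_right, ← mul_assoc]
        congr 1
        conv_rhs =>
          rw [← sub_add_cancel p 1, rpow_add_of_nonneg _ _ (sub_nonneg.2 hp) zero_le_one, rpow_one]

lemma rpow_neg_mul_mul_rpow_mul_add {x : ℝ≥0∞} (hx0 : x ≠ 0) (hx : x ≠ ⊤) (l s t : ℝ) :
    x ^ (-(l * s)) * x ^ (l * (s + t)) = (x ^ l) ^ t := by
  rw [← rpow_add _ _ hx0 hx, ← rpow_mul]
  ring_nf

lemma inv_one_sub_ofReal_rpow {ρ : ℝ} (hρ0 : 0 ≤ ρ) (hρ1 : ρ < 1) (p : ℝ) :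
    (1 - ENNReal.ofReal ρ)⁻¹ ^ p = ENNReal.ofReal ((1 - ρ) ^ (-p)) := by
  have hs : 0 < 1 - ρ := sub_pos.2 hρ1
  rw [← ofReal_one, ← ofReal_sub _ hρ0, inv_rpow, ofReal_rpow_of_pos hs,
    ← ofReal_inv_of_pos (by positivity), ← Real.rpow_neg hs.le]

end ENNReal

theorem copson_N (q l p : ℝ) (hq : 0 < q) (hq1 : q < 1) (hl : 0 < l)
    (hp : 1 < p) (a : ℕ → ℝ≥0∞) :
    ∑' n : ℕ, ((ENNReal.ofReal q) ^ (-(l * (n : ℝ))) *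
        ∑' m : ℕ, (ENNReal.ofReal q) ^ (l * ((n : ℝ) + (m : ℝ))) * a (n + m)) ^ p
      ≤ ENNReal.ofReal ((1 - q ^ l) ^ (-p)) * ∑' n : ℕ, (a n) ^ p := by
  have hql : q ^ l < 1 := Real.rpow_lt_one hq.le hq1 hl
  have rescale (n : ℕ) : (ENNReal.ofReal q) ^ (-(l * (n : ℝ))) *
      ∑' m : ℕ, (ENNReal.ofReal q) ^ (l * ((n : ℝ) + (m : ℝ))) * a (n + m) =
      ∑' m : ℕ, ENNReal.ofReal (q ^ l) ^ m * a (n + m) := by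
    rw [← ENNReal.tsum_mul_left]
    refine tsum_congr fun m => ?_
    rw [← mul_assoc,
      ENNReal.rpow_neg_mul_mul_rpow_mul_add (by simpa using hq) ENNReal.ofReal_ne_top,
      ENNReal.ofReal_rpow_of_pos hq, ENNReal.rpow_natCast]
  calc _ = ∑' n : ℕ, (∑' m : ℕ, ENNReal.ofReal (q ^ l) ^ m * a (n + m)) ^ p := by
        simp only [rescale]
    _ ≤ (∑' m : ℕ, ENNReal.ofReal (q ^ l) ^ m) ^ p * ∑' n : ℕ, a n ^ p :=
        ENNReal.tsum_rpow_tsum_mul_add_le hp.le _ a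
    _ = ENNReal.ofReal ((1 - q ^ l) ^ (-p)) * ∑' n : ℕ, a n ^ p := by
        rw [ENNReal.tsum_geometric, ENNReal.inv_one_sub_ofReal_rpow (by positivity) hql]
end

section
/- Let 0 < q < 1, λ > 0, and p > 1. For every sequence (a_n)_{n≥0} of nonnegative reals, ∑_{n=0}^∞ (q^{λn} ∑_{k=0}^{n} q^{-λk} a_k)^p ≤ (1-q^λ)^{-p} ∑_{n=0}^∞ a_n^p. -/
/-!
With `Q = q^λ` the inner sum is the one-sided convolution of `a` with the geometric weights
`w j = Q^j`, whose `ℓ¹` norm is `(1 - Q)⁻¹`. The bound is Young's inequality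
`‖w ∗ a‖_p ≤ ‖w‖₁ ‖a‖_p`: weighted Hölder bounds each term by `‖w‖₁^(p-1) (w ∗ aᵖ)(n)`, and
summing over `n` the Cauchy product gives `∑ (w ∗ aᵖ)(n) = ‖w‖₁ ∑ aᵖ`.
Working in `ℝ≥0∞` removes all summability side conditions.
-/

open scoped ENNReal

open Finset

namespace ENNReal

theorem rpow_inner_le_weight_rpow_mul_Lp {ι : Type*} (s : Finset ι) {p : ℝ} (hp : 1 ≤ p)
    (w f : ι → ℝ≥0∞) :
    (∑ i ∈ s, w i * f i) ^ p ≤ (∑ i ∈ s, w i) ^ (p - 1) * ∑ i ∈ s, w i * f i ^ p := by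
  have hp0 : 0 < p := by linarith
  calc (∑ i ∈ s, w i * f i) ^ p
      ≤ ((∑ i ∈ s, w i) ^ (1 - p⁻¹) * (∑ i ∈ s, w i * f i ^ p) ^ p⁻¹) ^ p :=
        rpow_le_rpow (inner_le_weight_mul_Lp_of_nonneg s hp w f) hp0.le
    _ = (∑ i ∈ s, w i) ^ (p - 1) * ∑ i ∈ s, w i * f i ^ p := by
        rw [mul_rpow_of_nonneg _ _ hp0.le, ← rpow_mul, ← rpow_mul, inv_mul_cancel₀ hp0.ne',
          rpow_one, sub_mul, one_mul, inv_mul_cancel₀ hp0.ne']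

theorem sum_range_succ_tsub_le_tsum (w : ℕ → ℝ≥0∞) (n : ℕ) :
    ∑ k ∈ range (n + 1), w (n - k) ≤ ∑' j, w j := by
  have hreflect := sum_range_reflect w (n + 1)
  rw [add_tsub_cancel_right] at hreflect
  rw [hreflect]
  exact ENNReal.sum_le_tsum _

theorem tsum_mul_tsum_eq_tsum_sum_range (f g : ℕ → ℝ≥0∞) :
    (∑' n, f n) * ∑' n, g n = ∑' n, ∑ k ∈ range (n + 1), f k * g (n - k) := by
  calc (∑' n, f n) * ∑' n, g n = ∑' x : ℕ × ℕ, f x.1 * g x.2 := by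
        rw [ENNReal.tsum_prod (f := fun i j => f i * g j), ← ENNReal.tsum_mul_right]
        simp_rw [← ENNReal.tsum_mul_left]
    _ = ∑' x : Σ n, antidiagonal n, f x.2.1.1 * g x.2.1.2 :=
        (HasAntidiagonal.sigmaAntidiagonalEquivProd.tsum_eq (fun x : ℕ × ℕ => f x.1 * g x.2)).symm
    _ = ∑' n, ∑ x ∈ antidiagonal n, f x.1 * g x.2 := by
        rw [ENNReal.tsum_sigma']
        simp_rw [Finset.tsum_subtype (antidiagonal _) (fun x : ℕ × ℕ => f x.1 * g x.2)]
    _ = _ := by simp_rw [Nat.sum_antidiagonal_eq_sum_range_succ fun k l => f k * g l]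

theorem tsum_rpow_convolution_le {p : ℝ} (hp : 1 ≤ p) (w a : ℕ → ℝ≥0∞) :
    ∑' n, (∑ k ∈ range (n + 1), w (n - k) * a k) ^ p ≤ (∑' j, w j) ^ p * ∑' n, a n ^ p := by
  set C := ∑' j, w j
  have hpointwise (n : ℕ) : (∑ k ∈ range (n + 1), w (n - k) * a k) ^ p
      ≤ C ^ (p - 1) * ∑ k ∈ range (n + 1), w (n - k) * a k ^ p :=
    (rpow_inner_le_weight_rpow_mul_Lp _ hp _ a).trans <| by
      gcongr
      exact sum_range_succ_tsub_le_tsum w n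
  have hcauchy : ∑' n, ∑ k ∈ range (n + 1), w (n - k) * a k ^ p = C * ∑' n, a n ^ p := by
    rw [mul_comm, tsum_mul_tsum_eq_tsum_sum_range]
    simp_rw [mul_comm (w _)]
  calc ∑' n, (∑ k ∈ range (n + 1), w (n - k) * a k) ^ p
      ≤ ∑' n, C ^ (p - 1) * ∑ k ∈ range (n + 1), w (n - k) * a k ^ p :=
        ENNReal.tsum_le_tsum hpointwise
    _ = C ^ p * ∑' n, a n ^ p := by
        have hpow : C ^ (p - 1) * C = C ^ p := by
          simpa using (rpow_add_of_nonneg (x := C) (p - 1) 1 (by linarith) zero_le_one).symm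
        rw [ENNReal.tsum_mul_left, hcauchy, ← mul_assoc, hpow]

theorem rpow_mul_sum_range_rpow_neg_mul {x : ℝ≥0∞} (hx0 : x ≠ 0) (hxt : x ≠ ∞) (l : ℝ) (n : ℕ)
    (a : ℕ → ℝ≥0∞) :
    x ^ (l * n) * ∑ k ∈ range (n + 1), x ^ (-(l * k)) * a k
      = ∑ k ∈ range (n + 1), (x ^ l) ^ (n - k) * a k := by
  rw [mul_sum]
  refine sum_congr rfl fun k hk => ?_
  have hkn : k ≤ n := Nat.lt_succ_iff.mp (mem_range.mp hk)
  rw [← mul_assoc, ← rpow_add _ _ hx0 hxt, ← rpow_natCast, ← rpow_mul, Nat.cast_sub hkn]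
  ring_nf

theorem tsum_geometric_ofReal_rpow {r : ℝ} (hr0 : 0 < r) (hr1 : r < 1) (p : ℝ) :
    (∑' j, ENNReal.ofReal r ^ j) ^ p = ENNReal.ofReal ((1 - r) ^ (-p)) := by
  rw [tsum_geometric, ← ofReal_one, ← ofReal_sub _ hr0.le, ← ofReal_inv_of_pos (by linarith),
    ofReal_rpow_of_pos (by simpa using hr1), Real.inv_rpow (by linarith),
    Real.rpow_neg (by linarith)]

end ENNReal

theorem hardy_N (q l p : ℝ) (hq : 0 < q) (hq1 : q < 1) (hl : 0 < l)
    (hp : 1 < p) (a : ℕ → ℝ≥0∞) :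
    ∑' n : ℕ, ((ENNReal.ofReal q) ^ (l * (n : ℝ)) *
        ∑ k ∈ Finset.range (n + 1), (ENNReal.ofReal q) ^ (-(l * (k : ℝ))) * a k) ^ p
      ≤ ENNReal.ofReal ((1 - q ^ l) ^ (-p)) * ∑' n : ℕ, (a n) ^ p := by
  have hq0 : ENNReal.ofReal q ≠ 0 := (ENNReal.ofReal_pos.2 hq).ne'
  simp_rw [ENNReal.rpow_mul_sum_range_rpow_neg_mul hq0 ENNReal.ofReal_ne_top,
    ENNReal.ofReal_rpow_of_pos hq]
  refine (ENNReal.tsum_rpow_convolution_le hp.le _ a).trans_eq ?_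
  rw [ENNReal.tsum_geometric_ofReal_rpow (Real.rpow_pos_of_pos hq l)
    (Real.rpow_lt_one hq.le hq1 hl)]
end

section
/- Let 0 < q < 1, λ > 0, and 0 < p < 1. For every sequence (a_n)_{n∈ℤ} of nonnegative reals with ∑_{n∈ℤ} a_n^p < ∞, the reverse inequality ∑_{n∈ℤ} (q^{-λn} ∑_{k=n}^∞ q^{λk} a_k)^p ≥ (1-q^λ)^{-p} ∑_{n∈ℤ} a_n^p holds. -/
/-!
Write `Q = q ^ l < 1`. After cancelling the powers of `q`, the `n`-th term of the right-hand side is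
`(∑ₘ Q ^ m a(n+m)) ^ p`. Hölder's inequality with exponents `1/p` and `1/(1-p)`, applied with
the geometric weights `Q ^ m` of total mass `(1 - Q)⁻¹`, bounds it below by
`(1 - Q) ^ (1 - p) ∑ₘ Q ^ m a(n+m) ^ p`. Summing over `n ∈ ℤ` and using that every shift
`n ↦ n + m` is a bijection of `ℤ` gives `(1 - Q) ^ (1 - p) (1 - Q)⁻¹ ∑ₙ a n ^ p`.
-/

open scoped ENNReal

open MeasureTheory in
theorem ENNReal.tsum_mul_rpow_le {ι : Type*} {p : ℝ} (hp0 : 0 < p) (hp1 : p < 1)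
    (w b : ι → ℝ≥0∞) :
    ∑' i, w i * b i ^ p ≤ (∑' i, w i * b i) ^ p * (∑' i, w i) ^ (1 - p) := by
  let : MeasurableSpace ι := ⊤
  have : MeasurableSingletonClass ι := ⟨fun _ => trivial⟩
  have hpq : (1 / p).HolderConjugate (1 / (1 - p)) :=
    Real.holderConjugate_one_div hp0 (by linarith) (by ring)
  have H := ENNReal.lintegral_mul_le_Lp_mul_Lq (Measure.count : Measure ι) hpq
    (f := fun i => (w i * b i) ^ p) (g := fun i => w i ^ (1 - p))
    measurable_from_top.aemeasurable measurable_from_top.aemeasurable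
  simp only [Pi.mul_apply, lintegral_count] at H
  have hprod : ∀ i, (w i * b i) ^ p * w i ^ (1 - p) = w i * b i ^ p := fun i => by
    rw [ENNReal.mul_rpow_of_nonneg _ _ hp0.le, mul_right_comm,
      ← ENNReal.rpow_add_of_nonneg _ _ hp0.le (by linarith), add_sub_cancel, ENNReal.rpow_one]
  have hroot : ∀ (x : ℝ≥0∞) {r : ℝ}, r ≠ 0 → (x ^ r) ^ (1 / r) = x := fun x r hr => by
    rw [← ENNReal.rpow_mul, mul_one_div_cancel hr, ENNReal.rpow_one]
  simpa only [hprod, hroot _ hp0.ne', hroot _ (sub_ne_zero.2 hp1.ne'), one_div_one_div] using H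

theorem ENNReal.tsum_ofReal_pow {Q : ℝ} (hQ0 : 0 ≤ Q) (hQ1 : Q < 1) :
    ∑' m : ℕ, ENNReal.ofReal (Q ^ m) = ENNReal.ofReal (1 - Q)⁻¹ := by
  rw [← ENNReal.ofReal_tsum_of_nonneg (fun m => by positivity)
    (summable_geometric_of_lt_one hQ0 hQ1), tsum_geometric_of_lt_one hQ0 hQ1]

theorem ENNReal.ofReal_one_sub_rpow_mul_tsum_pow_mul_rpow_le {p Q : ℝ} (hp0 : 0 < p)
    (hp1 : p < 1) (hQ0 : 0 ≤ Q) (hQ1 : Q < 1) (b : ℕ → ℝ≥0∞) :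
    ENNReal.ofReal ((1 - Q) ^ (1 - p)) * ∑' m, ENNReal.ofReal (Q ^ m) * b m ^ p
      ≤ (∑' m, ENNReal.ofReal (Q ^ m) * b m) ^ p := by
  have h1Q : 0 < 1 - Q := by linarith
  have hmass : ENNReal.ofReal ((1 - Q) ^ (1 - p)) * (∑' m : ℕ, ENNReal.ofReal (Q ^ m)) ^ (1 - p)
      = 1 := by
    rw [ENNReal.tsum_ofReal_pow hQ0 hQ1, ENNReal.ofReal_rpow_of_pos (inv_pos.2 h1Q),
      ← ENNReal.ofReal_mul (by positivity), ← Real.mul_rpow h1Q.le (inv_pos.2 h1Q).le,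
      mul_inv_cancel₀ h1Q.ne', Real.one_rpow, ENNReal.ofReal_one]
  calc ENNReal.ofReal ((1 - Q) ^ (1 - p)) * ∑' m, ENNReal.ofReal (Q ^ m) * b m ^ p
      ≤ ENNReal.ofReal ((1 - Q) ^ (1 - p)) *
        ((∑' m, ENNReal.ofReal (Q ^ m) * b m) ^ p * (∑' m, ENNReal.ofReal (Q ^ m)) ^ (1 - p)) :=
        mul_le_mul_right (ENNReal.tsum_mul_rpow_le hp0 hp1 _ b) _
    _ = (∑' m, ENNReal.ofReal (Q ^ m) * b m) ^ p := by rw [mul_left_comm, hmass, mul_one]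

theorem ENNReal.tsum_int_tsum_ofReal_pow_mul_shift {Q : ℝ} (hQ0 : 0 ≤ Q) (hQ1 : Q < 1)
    (f : ℤ → ℝ≥0∞) :
    ∑' n : ℤ, ∑' m : ℕ, ENNReal.ofReal (Q ^ m) * f (n + m)
      = ENNReal.ofReal (1 - Q)⁻¹ * ∑' n, f n := by
  have hshift (m : ℕ) : ∑' n : ℤ, f (n + m) = ∑' n, f n := (Equiv.addRight (m : ℤ)).tsum_eq f
  rw [ENNReal.tsum_comm]
  simp only [ENNReal.tsum_mul_left, hshift]
  rw [ENNReal.tsum_mul_right, ENNReal.tsum_ofReal_pow hQ0 hQ1]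

theorem ENNReal.ofReal_rpow_neg_mul_ofReal_rpow_add {q : ℝ} (hq : 0 < q) (l x : ℝ) (m : ℕ) :
    ENNReal.ofReal q ^ (-(l * x)) * ENNReal.ofReal q ^ (l * (x + m))
      = ENNReal.ofReal ((q ^ l) ^ m) := by
  rw [← ENNReal.rpow_add _ _ (by simpa using hq) ENNReal.ofReal_ne_top,
    ENNReal.ofReal_rpow_of_pos hq, ← Real.rpow_natCast, ← Real.rpow_mul hq.le]
  ring_nf

theorem copson_Z_reverse_general (q l p : ℝ) (hq : 0 < q) (hq1 : q < 1) (hl : 0 < l)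
    (hp0 : 0 < p) (hp1 : p < 1) (a : ℤ → ℝ≥0∞) :
    ENNReal.ofReal ((1 - q ^ l) ^ (-p)) * ∑' n : ℤ, (a n) ^ p
      ≤ ∑' n : ℤ, ((ENNReal.ofReal q) ^ (-(l * (n : ℝ))) *
          ∑' m : ℕ, (ENNReal.ofReal q) ^ (l * ((n : ℝ) + (m : ℝ))) * a (n + m)) ^ p := by
  set Q : ℝ := q ^ l
  have hQ0 : 0 ≤ Q := by positivity
  have hQ1 : Q < 1 := Real.rpow_lt_one hq.le hq1 hl
  have h1Q : 0 < 1 - Q := by linarith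
  have hconst : ENNReal.ofReal ((1 - Q) ^ (-p))
      = ENNReal.ofReal ((1 - Q) ^ (1 - p)) * ENNReal.ofReal (1 - Q)⁻¹ := by
    rw [← ENNReal.ofReal_mul (by positivity), ← Real.rpow_neg_one, ← Real.rpow_add h1Q]
    ring_nf
  have hkernel (n : ℤ) : ENNReal.ofReal q ^ (-(l * n)) *
      ∑' m : ℕ, ENNReal.ofReal q ^ (l * (n + m)) * a (n + m)
        = ∑' m : ℕ, ENNReal.ofReal (Q ^ m) * a (n + m) := by
    simp only [← ENNReal.tsum_mul_left, ← mul_assoc,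
      ENNReal.ofReal_rpow_neg_mul_ofReal_rpow_add hq]
    rfl
  simp only [hkernel]
  calc ENNReal.ofReal ((1 - Q) ^ (-p)) * ∑' n : ℤ, a n ^ p
      = ∑' n : ℤ, ENNReal.ofReal ((1 - Q) ^ (1 - p)) *
          ∑' m : ℕ, ENNReal.ofReal (Q ^ m) * a (n + m) ^ p := by
        rw [ENNReal.tsum_mul_left, ENNReal.tsum_int_tsum_ofReal_pow_mul_shift hQ0 hQ1 (a · ^ p),
          hconst,
          mul_assoc]
    _ ≤ ∑' n : ℤ, (∑' m : ℕ, ENNReal.ofReal (Q ^ m) * a (n + m)) ^ p :=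
        ENNReal.tsum_le_tsum fun n =>
          ENNReal.ofReal_one_sub_rpow_mul_tsum_pow_mul_rpow_le hp0 hp1 hQ0 hQ1 _

theorem copson_Z_reverse (q l p : ℝ) (hq : 0 < q) (hq1 : q < 1) (hl : 0 < l)
    (hp0 : 0 < p) (hp1 : p < 1) (a : ℤ → ℝ≥0∞)
    (hfin : (∑' n : ℤ, (a n) ^ p) ≠ ⊤) :
    ENNReal.ofReal ((1 - q ^ l) ^ (-p)) * ∑' n : ℤ, (a n) ^ p
      ≤ ∑' n : ℤ, ((ENNReal.ofReal q) ^ (-(l * (n : ℝ))) *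
          ∑' m : ℕ, (ENNReal.ofReal q) ^ (l * ((n : ℝ) + (m : ℝ))) * a (n + m)) ^ p :=
  copson_Z_reverse_general q l p hq hq1 hl hp0 hp1 a
end

section
/- Let 0 < q < 1, λ > 0, 0 < p < 1, and let (a_n)_{n≥0} be a nonnegative sequence, not identically zero, with ∑_{n≥0} a_n^p < ∞. Then ∑_{n=0}^∞ (q^{-λn} ∑_{k=n}^∞ q^{λk} a_k)^p > (1-q^λ)^{-p} ∑_{n=0}^∞ (1 - q^{λn}) a_n^p. -/
/-!
Put `R = q ^ λ ∈ (0, 1)`; the right-hand side is `∑ₙ (∑ₘ Rᵐ aₙ₊ₘ) ^ p`. For `p < 1`, Hölder's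
inequality with the geometric weights `Rᵐ` and exponents `1 - p`, `p` gives the reverse bound
`(1 - R) ^ (1 - p) ∑ₘ Rᵐ bₘ ^ p ≤ (∑ₘ Rᵐ bₘ) ^ p`. Summing over `n` and exchanging the order of
summation turns the left side into `(1 - R) ^ (-p) ∑ₖ (1 - R ^ (k + 1)) aₖ ^ p`, which strictly
exceeds `(1 - R) ^ (-p) ∑ₖ (1 - R ^ k) aₖ ^ p` as soon as some `aₖ ≠ 0` and the sums are finite.
-/

open scoped ENNReal
open Finset

namespace ENNReal

theorem tsum_mul_rpow_le_s8 {ι : Type*} {p : ℝ} (hp0 : 0 ≤ p) (hp1 : p ≤ 1) (w b : ι → ℝ≥0∞) :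
    ∑' i, w i * b i ^ p ≤ (∑' i, w i) ^ (1 - p) * (∑' i, w i * b i) ^ p := by
  let _ : MeasurableSpace ι := ⊤
  have holder := lintegral_mul_norm_pow_le (μ := MeasureTheory.Measure.count)
    (f := w) (g := fun i => w i * b i) measurable_from_top.aemeasurable
    measurable_from_top.aemeasurable (sub_nonneg.2 hp1) hp0 (sub_add_cancel 1 p)
  simp only [MeasureTheory.lintegral_count] at holder
  refine (tsum_congr fun i => ?_).trans_le holder
  rw [mul_rpow_of_nonneg _ _ hp0, ← mul_assoc, ← rpow_add_of_nonneg _ _ (sub_nonneg.2 hp1) hp0,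
    sub_add_cancel, rpow_one]

theorem one_sub_rpow_mul_tsum_geometric_mul_rpow_le {R : ℝ≥0∞} (hR1 : R < 1) {p : ℝ}
    (hp0 : 0 ≤ p) (hp1 : p ≤ 1) (b : ℕ → ℝ≥0∞) :
    (1 - R) ^ (1 - p) * ∑' m, R ^ m * b m ^ p ≤ (∑' m, R ^ m * b m) ^ p := by
  have hD0 : (1 - R) ^ (1 - p) ≠ 0 :=
    (rpow_pos (tsub_pos_of_lt hR1) (sub_ne_top one_ne_top)).ne'
  have hDtop : (1 - R) ^ (1 - p) ≠ ∞ :=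
    rpow_ne_top_of_nonneg (sub_nonneg.2 hp1) (sub_ne_top one_ne_top)
  calc (1 - R) ^ (1 - p) * ∑' m, R ^ m * b m ^ p
      ≤ (1 - R) ^ (1 - p) * (((1 - R) ^ (1 - p))⁻¹ * (∑' m, R ^ m * b m) ^ p) := by
        gcongr
        simpa only [tsum_geometric, inv_rpow] using tsum_mul_rpow_le_s8 hp0 hp1 (R ^ ·) b
    _ = (∑' m, R ^ m * b m) ^ p := by rw [← mul_assoc, ENNReal.mul_inv_cancel hD0 hDtop, one_mul]

theorem tsum_tsum_mul_add_eq_tsum_sum_range (g h : ℕ → ℝ≥0∞) :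
    ∑' n, ∑' m, g m * h (n + m) = ∑' k, (∑ m ∈ range (k + 1), g m) * h k := by
  rw [← ENNReal.tsum_prod, ← HasAntidiagonal.sigmaAntidiagonalEquivProd.tsum_eq,
    ENNReal.tsum_sigma']
  refine tsum_congr fun k => ?_
  simp only [HasAntidiagonal.sigmaAntidiagonalEquivProd_apply]
  rw [tsum_congr fun x : antidiagonal k => by rw [mem_antidiagonal.1 x.2],
    Finset.tsum_subtype (antidiagonal k) (fun x : ℕ × ℕ => g x.2 * h k), ← Finset.sum_mul,
    ← Nat.sum_antidiagonal_swap, Nat.sum_antidiagonal_eq_sum_range_succ_mk]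
  rfl

theorem one_sub_mul_geom_sum (x : ℝ≥0∞) (n : ℕ) :
    (1 - x) * ∑ i ∈ range n, x ^ i = 1 - x ^ n := by
  rcases le_or_gt x 1 with hx | hx
  · induction n with
    | zero => simp
    | succ n ih =>
      have hxn : x ^ (n + 1) ≤ x ^ n := pow_le_pow_of_le_one zero_le hx n.le_succ
      rw [sum_range_succ, mul_add, ih,
        ENNReal.sub_mul fun _ _ => pow_ne_top (ne_top_of_le_ne_top one_ne_top hx), one_mul,
        ← pow_succ', tsub_add_tsub_cancel (pow_le_one₀ zero_le hx) hxn]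
  · rw [tsub_eq_zero_of_le hx.le, tsub_eq_zero_of_le (one_le_pow₀ hx.le), zero_mul]

theorem tsum_one_sub_pow_mul_lt {R : ℝ≥0∞} (hR0 : R ≠ 0) (hR1 : R < 1) {c : ℕ → ℝ≥0∞}
    (hc : ∑' n, c n ≠ ∞) {i : ℕ} (hi : c i ≠ 0) :
    ∑' n, (1 - R ^ n) * c n < ∑' n, (1 - R ^ (n + 1)) * c n := by
  have hRn (n : ℕ) : R ^ (n + 1) ≤ R ^ n := pow_le_pow_of_le_one zero_le hR1.le n.le_succ
  refine ENNReal.tsum_lt_tsum (i := i) ?_ (fun n => by gcongr (1 - ?_) * _; exact hRn n) ?_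
  · refine ne_top_of_le_ne_top hc (ENNReal.tsum_le_tsum fun n => ?_)
    exact mul_le_of_le_one_left zero_le tsub_le_self
  · have hRi : R ^ (i + 1) < R ^ i := by
      simpa [← pow_succ'] using
        ENNReal.mul_lt_mul_left (pow_ne_zero i hR0) (pow_ne_top hR1.ne_top) hR1
    refine ENNReal.mul_lt_mul_left hi (ne_top_of_le_ne_top hc (ENNReal.le_tsum i)) ?_
    exact (cancel_of_ne (sub_ne_top one_ne_top)).tsub_lt_tsub_left_of_le
      (pow_le_one₀ zero_le hR1.le) hRi

end ENNReal

open ENNReal in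
theorem copson_reverse_geometric {R : ℝ≥0∞} (hR0 : R ≠ 0) (hR1 : R < 1) {p : ℝ} (hp0 : 0 < p)
    (hp1 : p < 1) {a : ℕ → ℝ≥0∞} (ha : ∃ n, a n ≠ 0) (hfin : ∑' n, a n ^ p ≠ ∞) :
    (1 - R) ^ (-p) * ∑' n, (1 - R ^ n) * a n ^ p < ∑' n, (∑' m, R ^ m * a (n + m)) ^ p := by
  obtain ⟨i, hai⟩ := ha
  have h1R0 : 1 - R ≠ 0 := (tsub_pos_of_lt hR1).ne'
  have h1Rtop : 1 - R ≠ ∞ := sub_ne_top one_ne_top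
  have hcoef (k : ℕ) : (1 - R) ^ (-p) * (1 - R ^ (k + 1))
      = (1 - R) ^ (1 - p) * ∑ m ∈ range (k + 1), R ^ m := by
    rw [← one_sub_mul_geom_sum, ← mul_assoc, sub_eq_neg_add, rpow_add _ _ h1R0 h1Rtop, rpow_one]
  calc (1 - R) ^ (-p) * ∑' n, (1 - R ^ n) * a n ^ p
      < (1 - R) ^ (-p) * ∑' n, (1 - R ^ (n + 1)) * a n ^ p := by
        refine ENNReal.mul_lt_mul_right (rpow_pos (tsub_pos_of_lt hR1) h1Rtop).ne'
          (rpow_ne_top_of_ne_zero h1R0 h1Rtop) ?_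
        exact tsum_one_sub_pow_mul_lt hR0 hR1 hfin (i := i)
          (by simp [hai, hp0.le, ENNReal.rpow_eq_zero_iff])
    _ = (1 - R) ^ (1 - p) * ∑' k, (∑ m ∈ range (k + 1), R ^ m) * a k ^ p := by
        simp only [← ENNReal.tsum_mul_left, ← mul_assoc, hcoef]
    _ = (1 - R) ^ (1 - p) * ∑' n, ∑' m, R ^ m * a (n + m) ^ p := by
        rw [tsum_tsum_mul_add_eq_tsum_sum_range (R ^ ·) (a · ^ p)]
    _ ≤ ∑' n, (∑' m, R ^ m * a (n + m)) ^ p := by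
        rw [← ENNReal.tsum_mul_left]
        exact ENNReal.tsum_le_tsum fun n =>
          one_sub_rpow_mul_tsum_geometric_mul_rpow_le hR1 hp0.le hp1.le (a <| n + ·)

theorem copson_N_reverse_weighted (q l p : ℝ) (hq : 0 < q) (hq1 : q < 1) (hl : 0 < l)
    (hp0 : 0 < p) (hp1 : p < 1) (a : ℕ → ℝ≥0∞)
    (ha : ∃ n, a n ≠ 0) (hfin : (∑' n : ℕ, (a n) ^ p) ≠ ⊤) :
    ENNReal.ofReal ((1 - q ^ l) ^ (-p)) *
        ∑' n : ℕ, ENNReal.ofReal (1 - q ^ (l * (n : ℝ))) * (a n) ^ p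
      < ∑' n : ℕ, ((ENNReal.ofReal q) ^ (-(l * (n : ℝ))) *
          ∑' m : ℕ, (ENNReal.ofReal q) ^ (l * ((n : ℝ) + (m : ℝ))) * a (n + m)) ^ p := by
  set Q := ENNReal.ofReal q
  have hQ0 : Q ≠ 0 := (ENNReal.ofReal_pos.2 hq).ne'
  have hQ_mul (x : ℝ) : Q ^ (l * x) = (Q ^ l) ^ x := ENNReal.rpow_mul _ _ _
  have hlhs (x : ℝ) : ENNReal.ofReal (1 - q ^ x) = 1 - Q ^ x := by
    rw [ENNReal.ofReal_sub _ (by positivity), ENNReal.ofReal_one, ENNReal.ofReal_rpow_of_pos hq]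
  have hrhs (n : ℕ) : Q ^ (-(l * (n : ℝ))) * ∑' m : ℕ, Q ^ (l * ((n : ℝ) + (m : ℝ))) * a (n + m)
      = ∑' m : ℕ, (Q ^ l) ^ m * a (n + m) := by
    rw [← ENNReal.tsum_mul_left]
    refine tsum_congr fun m => ?_
    rw [← mul_assoc, ← ENNReal.rpow_add _ _ hQ0 ENNReal.ofReal_ne_top,
      show -(l * n) + l * (n + m) = l * m by ring, hQ_mul, ENNReal.rpow_natCast]
  rw [← ENNReal.ofReal_rpow_of_pos (sub_pos.2 (Real.rpow_lt_one hq.le hq1 hl)), hlhs]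
  simp only [hrhs]
  simp only [hlhs, hQ_mul, ENNReal.rpow_natCast]
  exact copson_reverse_geometric (ENNReal.rpow_pos hQ0.bot_lt ENNReal.ofReal_ne_top).ne'
    (ENNReal.rpow_lt_one (ENNReal.ofReal_lt_one.2 hq1) hl) hp0 hp1 ha hfin
end

section
/- Let 0 < q < 1, λ > 0, 0 < p < 1, and let (a_n)_{n≥0} be a nonnegative sequence, not identically zero, with ∑_{n≥0} a_n^p < ∞. Then ∑_{n=0}^∞ (q^{-λn} ∑_{k=n}^∞ q^{λk} a_k)^p + (1-q^λ)^{-1} (∑_{n=0}^∞ q^{λn} a_n)^p > (1-q^λ)^{-p} ∑_{n=0}^∞ a_n^p. -/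
/-!
Put `Q = q^λ`, `g k = a k ^ p` and `b n = ∑ₘ Q^m a (n+m)`. The weights `(1-Q) Q^m` have total
mass one, so concavity of `t ↦ t^p` gives `(1-Q) ∑ₘ Q^m g (n+m) ≤ ((1-Q) b n)^p` for every `n`.
Regrouping the double sum by `k = n + m` shows that `(1-Q) ∑ₙ ∑ₘ Q^m g (n+m) = ∑ g - Q E` with
`E = ∑ₖ Q^k g k`, and `E` is the `n = 0` instance of the left-hand side, hence at most
`(1-Q)^(p-1) (b 0)^p`. Since `0 < E < ∞` and `Q < 1`, `∑ g = (1-Q) ∑∑ + Q E < (1-Q) ∑∑ + E`,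
which gives the strict inequality after dividing by `(1-Q)^p`.
-/

open scoped ENNReal
open Finset

namespace ENNReal

theorem sum_mul_rpow_le_rpow_sum_mul {ι : Type*} (s : Finset ι) {p : ℝ} (hp0 : 0 < p)
    (hp1 : p ≤ 1) (w z : ι → ℝ≥0∞) (hw : ∑ i ∈ s, w i ≤ 1) :
    ∑ i ∈ s, w i * z i ^ p ≤ (∑ i ∈ s, w i * z i) ^ p := by
  -- weighted Hölder with exponent `1/p`, applied to `z^p`
  have holder := inner_le_weight_mul_Lp_of_nonneg s (one_le_inv₀ hp0 |>.2 hp1) w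
    (fun i => z i ^ p)
  simp only [← rpow_mul, mul_inv_cancel₀ hp0.ne', rpow_one, inv_inv] at holder
  calc ∑ i ∈ s, w i * z i ^ p ≤ (∑ i ∈ s, w i) ^ (1 - p) * (∑ i ∈ s, w i * z i) ^ p := holder
    _ ≤ 1 * (∑ i ∈ s, w i * z i) ^ p := by
      gcongr; exact rpow_le_one hw (sub_nonneg.2 hp1)
    _ = _ := one_mul _

theorem tsum_mul_rpow_le_rpow_tsum_mul {ι : Type*} {p : ℝ} (hp0 : 0 < p) (hp1 : p ≤ 1)
    (w z : ι → ℝ≥0∞) (hw : ∑' i, w i ≤ 1) :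
    ∑' i, w i * z i ^ p ≤ (∑' i, w i * z i) ^ p := by
  rw [ENNReal.tsum_eq_iSup_sum]
  refine iSup_le fun s => ?_
  calc ∑ i ∈ s, w i * z i ^ p ≤ (∑ i ∈ s, w i * z i) ^ p :=
        sum_mul_rpow_le_rpow_sum_mul s hp0 hp1 w z ((ENNReal.sum_le_tsum s).trans hw)
    _ ≤ (∑' i, w i * z i) ^ p := by gcongr; exact ENNReal.sum_le_tsum s

theorem one_sub_mul_tsum_geometric_mul_rpow_le {p : ℝ} (hp0 : 0 < p) (hp1 : p ≤ 1)
    (Q : ℝ≥0∞) (z : ℕ → ℝ≥0∞) :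
    (1 - Q) * ∑' m, Q ^ m * z m ^ p ≤ ((1 - Q) * ∑' m, Q ^ m * z m) ^ p := by
  simp only [← ENNReal.tsum_mul_left, ← mul_assoc]
  refine tsum_mul_rpow_le_rpow_tsum_mul hp0 hp1 _ z ?_
  rw [ENNReal.tsum_mul_left, tsum_geometric]
  exact ENNReal.mul_inv_le_one _

theorem tsum_tsum_eq_tsum_sum_antidiagonal {A : Type*} [AddCommMonoid A] [HasAntidiagonal A]
    (f : A → A → ℝ≥0∞) :
    ∑' a, ∑' b, f a b = ∑' n, ∑ x ∈ antidiagonal n, f x.1 x.2 := by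
  rw [← ENNReal.tsum_prod, ← HasAntidiagonal.sigmaAntidiagonalEquivProd.tsum_eq,
    ENNReal.tsum_sigma']
  exact tsum_congr fun n => tsum_subtype (antidiagonal n) (fun x => f x.1 x.2)

theorem tsum_tsum_mul_add_eq_tsum_sum_range_mul (c g : ℕ → ℝ≥0∞) :
    ∑' n, ∑' m, c m * g (n + m) = ∑' k, (∑ j ∈ range (k + 1), c j) * g k := by
  rw [tsum_tsum_eq_tsum_sum_antidiagonal]
  refine tsum_congr fun k => ?_
  rw [← Nat.sum_antidiagonal_swap, sum_mul, Nat.sum_antidiagonal_eq_sum_range_succ_mk]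
  refine sum_congr rfl fun j hj => ?_
  simp only [Prod.swap_prod_mk]
  rw [Nat.sub_add_cancel (by simpa [Nat.lt_succ_iff] using hj)]

theorem one_sub_mul_geom_sum_add_pow {Q : ℝ≥0∞} (hQ : Q ≤ 1) (k : ℕ) :
    (1 - Q) * ∑ j ∈ range k, Q ^ j + Q ^ k = 1 := by
  induction k with
  | zero => simp
  | succ k ih =>
    rw [sum_range_succ, mul_add, pow_succ', add_assoc, ← add_mul, tsub_add_cancel_of_le hQ,
      one_mul, ih]

end ENNReal

open ENNReal

noncomputable def geomTail (Q : ℝ≥0∞) (a : ℕ → ℝ≥0∞) (n : ℕ) : ℝ≥0∞ :=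
  ∑' m, Q ^ m * a (n + m)

theorem one_sub_mul_tsum_geomTail_add {Q : ℝ≥0∞} (hQ : Q ≤ 1) (g : ℕ → ℝ≥0∞) :
    (1 - Q) * ∑' n, geomTail Q g n + Q * geomTail Q g 0 = ∑' k, g k := by
  simp only [geomTail, zero_add]
  rw [tsum_tsum_mul_add_eq_tsum_sum_range_mul, ← ENNReal.tsum_mul_left, ← ENNReal.tsum_mul_left,
    ← ENNReal.tsum_add]
  refine tsum_congr fun k => ?_
  rw [← mul_assoc, ← mul_assoc, ← pow_succ', ← add_mul, one_sub_mul_geom_sum_add_pow hQ,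
    one_mul]

theorem one_sub_mul_geomTail_rpow_le {p : ℝ} (hp0 : 0 < p) (hp1 : p ≤ 1) (Q : ℝ≥0∞)
    (a : ℕ → ℝ≥0∞) (n : ℕ) :
    (1 - Q) * geomTail Q (fun k => a k ^ p) n ≤ (1 - Q) ^ p * geomTail Q a n ^ p := by
  rw [← mul_rpow_of_nonneg _ _ hp0.le]
  exact one_sub_mul_tsum_geometric_mul_rpow_le hp0 hp1 Q fun m => a (n + m)

theorem geomTail_zero_ne_zero {Q : ℝ≥0∞} (hQ : Q ≠ 0) {a : ℕ → ℝ≥0∞} (ha : ∃ n, a n ≠ 0) :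
    geomTail Q a 0 ≠ 0 := by
  obtain ⟨n, hn⟩ := ha
  refine (pos_iff_ne_zero.2 (mul_ne_zero (pow_ne_zero n hQ) hn)).trans_le ?_ |>.ne'
  simpa only [geomTail, zero_add] using ENNReal.le_tsum (f := fun m => Q ^ m * a m) n

theorem geomTail_le_tsum {Q : ℝ≥0∞} (hQ : Q ≤ 1) (a : ℕ → ℝ≥0∞) :
    geomTail Q a 0 ≤ ∑' n, a n := by
  simp only [geomTail, zero_add]
  exact ENNReal.tsum_le_tsum fun n => mul_le_of_le_one_left' (pow_le_one₀ zero_le hQ)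

theorem rpow_neg_mul_tsum_rpow_lt_tsum_geomTail_rpow_add {Q : ℝ≥0∞} (hQ0 : Q ≠ 0) (hQ1 : Q < 1)
    {p : ℝ} (hp0 : 0 < p) (hp1 : p ≤ 1) (a : ℕ → ℝ≥0∞) (ha : ∃ n, a n ≠ 0)
    (hfin : ∑' n, a n ^ p ≠ ⊤) :
    (1 - Q) ^ (-p) * ∑' n, a n ^ p
      < ∑' n, geomTail Q a n ^ p + (1 - Q)⁻¹ * geomTail Q a 0 ^ p := by
  set Y := 1 - Q
  have hY0 : Y ≠ 0 := (tsub_pos_of_lt hQ1).ne'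
  have hYt : Y ≠ ⊤ := ne_top_of_le_ne_top one_ne_top tsub_le_self
  set E := geomTail Q (fun k => a k ^ p) 0
  have hE0 : E ≠ 0 := geomTail_zero_ne_zero hQ0 <| ha.imp fun n hn =>
    (rpow_pos_of_nonneg (pos_iff_ne_zero.2 hn) hp0.le).ne'
  have hEt : E ≠ ⊤ := ne_top_of_le_ne_top hfin (geomTail_le_tsum hQ1.le _)
  set D := ∑' n, geomTail Q (fun k => a k ^ p) n
  have hregroup : Y * D + Q * E = ∑' n, a n ^ p :=
    one_sub_mul_tsum_geomTail_add hQ1.le fun k => a k ^ p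
  have hYD : Y * D ≠ ⊤ := ne_top_of_le_ne_top hfin (hregroup ▸ le_self_add)
  have hbulk : Y * D ≤ Y ^ p * ∑' n, geomTail Q a n ^ p := by
    rw [← ENNReal.tsum_mul_left, ← ENNReal.tsum_mul_left]
    exact ENNReal.tsum_le_tsum (one_sub_mul_geomTail_rpow_le hp0 hp1 Q a)
  have hboundary : E ≤ Y⁻¹ * (Y ^ p * geomTail Q a 0 ^ p) := by
    rw [← ENNReal.inv_mul_cancel_left hY0 hYt (b := E)]
    exact mul_le_mul_right (one_sub_mul_geomTail_rpow_le hp0 hp1 Q a 0) _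
  have hYp0 : Y ^ p ≠ 0 := (rpow_pos_of_nonneg (pos_iff_ne_zero.2 hY0) hp0.le).ne'
  rw [← ENNReal.mul_lt_mul_iff_right hYp0 (rpow_ne_top_of_nonneg hp0.le hYt)]
  calc Y ^ p * (Y ^ (-p) * ∑' n, a n ^ p) = ∑' n, a n ^ p := by
        rw [← mul_assoc, ← rpow_add _ _ hY0 hYt, add_neg_cancel, rpow_zero, one_mul]
    _ = Y * D + Q * E := hregroup.symm
    _ < Y * D + E :=
        ENNReal.add_lt_add_left hYD (by simpa using ENNReal.mul_lt_mul_left hE0 hEt hQ1)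
    _ ≤ Y ^ p * ∑' n, geomTail Q a n ^ p + Y⁻¹ * (Y ^ p * geomTail Q a 0 ^ p) :=
        add_le_add hbulk hboundary
    _ = Y ^ p * (∑' n, geomTail Q a n ^ p + Y⁻¹ * geomTail Q a 0 ^ p) := by ring

theorem rpow_neg_mul_tsum_rpow_mul_eq_geomTail {r : ℝ≥0∞} (hr0 : r ≠ 0) (hrt : r ≠ ⊤) (l : ℝ)
    (a : ℕ → ℝ≥0∞) (n : ℕ) :
    r ^ (-(l * (n : ℝ))) * ∑' m : ℕ, r ^ (l * ((n : ℝ) + (m : ℝ))) * a (n + m)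
      = geomTail (r ^ l) a n := by
  have hsplit (m : ℕ) : r ^ (l * ((n : ℝ) + (m : ℝ))) * a (n + m)
      = r ^ (l * (n : ℝ)) * ((r ^ l) ^ m * a (n + m)) := by
    rw [mul_add, rpow_add _ _ hr0 hrt, mul_assoc, rpow_mul r l m, rpow_natCast]
  rw [tsum_congr hsplit, ENNReal.tsum_mul_left, ← mul_assoc, ← rpow_add _ _ hr0 hrt,
    neg_add_cancel, rpow_zero, one_mul, geomTail]

theorem tsum_rpow_mul_eq_geomTail_zero (r : ℝ≥0∞) (l : ℝ) (a : ℕ → ℝ≥0∞) :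
    ∑' n : ℕ, r ^ (l * (n : ℝ)) * a n = geomTail (r ^ l) a 0 := by
  simp only [geomTail, zero_add, rpow_mul, rpow_natCast]

theorem copson_N_reverse_boundary (q l p : ℝ) (hq : 0 < q) (hq1 : q < 1) (hl : 0 < l)
    (hp0 : 0 < p) (hp1 : p < 1) (a : ℕ → ℝ≥0∞)
    (ha : ∃ n, a n ≠ 0) (hfin : (∑' n : ℕ, (a n) ^ p) ≠ ⊤) :
    ENNReal.ofReal ((1 - q ^ l) ^ (-p)) * ∑' n : ℕ, (a n) ^ p
      < (∑' n : ℕ, ((ENNReal.ofReal q) ^ (-(l * (n : ℝ))) *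
            ∑' m : ℕ, (ENNReal.ofReal q) ^ (l * ((n : ℝ) + (m : ℝ))) * a (n + m)) ^ p) +
        ENNReal.ofReal ((1 - q ^ l)⁻¹) *
          (∑' n : ℕ, (ENNReal.ofReal q) ^ (l * (n : ℝ)) * a n) ^ p := by
  have hQ : ENNReal.ofReal q ^ l = ENNReal.ofReal (q ^ l) := ofReal_rpow_of_pos hq
  have hQ1 : q ^ l < 1 := Real.rpow_lt_one hq.le hq1 hl
  have hY : ENNReal.ofReal (1 - q ^ l) = 1 - ENNReal.ofReal q ^ l := by
    rw [hQ, ofReal_sub _ (by positivity), ofReal_one]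
  rw [← ofReal_rpow_of_pos (sub_pos.2 hQ1), ofReal_inv_of_pos (sub_pos.2 hQ1), hY,
    tsum_rpow_mul_eq_geomTail_zero]
  simp only [rpow_neg_mul_tsum_rpow_mul_eq_geomTail (ofReal_pos.2 hq).ne' ofReal_ne_top]
  refine rpow_neg_mul_tsum_rpow_lt_tsum_geomTail_rpow_add ?_ ?_ hp0 hp1.le a ha hfin
  · rw [hQ]; exact (ofReal_pos.2 (by positivity)).ne'
  · rwa [hQ, ofReal_lt_one]
end

section
/- Let 0 < q < 1, p > 1, α < 1 - 1/p, β > -1/p, and f_β(t) = t^β · χ_{(0,1]}(t). Then ∫_0^∞ x^{p(α-1)} (∫_0^x t^{-α} f_β(t) d_q t)^p d_q x ≥ ((1-q)/(1 - q^{1-α+β}))^p · 1/[1+pβ]_q. -/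
theorem test_function_lower_bound (q p α β : ℝ) (hq : 0 < q) (hq1 : q < 1)
    (hp : 1 < p) (hα : α < 1 - 1 / p) (hβ : -1 / p < β) (f : ℝ → ℝ)
    (hf : ∀ t : ℝ, 0 < t → f t = if t ≤ 1 then t ^ β else 0) :
    ((1 - q) / (1 - q ^ (1 - α + β))) ^ p * ((1 - q) / (1 - q ^ (1 + p * β)))
      ≤ (1 - q) * ∑' j : ℤ, q ^ ((j : ℝ) * (p * (α - 1) + 1)) *
          ((1 - q) * ∑' m : ℕ, q ^ (((j : ℝ) + (m : ℝ)) * (1 - α)) *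
            f (q ^ ((j : ℝ) + (m : ℝ)))) ^ p := by
  have hp0 : (0 : ℝ) < p := lt_trans one_pos hp
  have hq0 : (0 : ℝ) ≤ q := hq.le
  have h1q : (0 : ℝ) < 1 - q := by linarith
  set c : ℝ := 1 - α + β with hcdef
  set d : ℝ := 1 + p * β with hddef
  set e : ℝ := p * (α - 1) + 1 with hedef
  have hc : 0 < c := by
    have : -1 / p = -(1 / p) := by ring
    rw [hcdef]; rw [this] at hβ; linarith
  have hd : 0 < d := by
    have h := mul_pos hp0 (show (0 : ℝ) < β + 1 / p by
      have : -1 / p = -(1 / p) := by ring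
      rw [this] at hβ; linarith)
    rw [mul_add, mul_one_div, div_self (ne_of_gt hp0)] at h
    rw [hddef]; linarith
  have he : e < 0 := by
    have h := mul_pos hp0 (show (0 : ℝ) < (1 - α) - 1 / p by linarith)
    rw [mul_sub, mul_one_div, div_self (ne_of_gt hp0)] at h
    rw [hedef]; nlinarith
  have hqc1 : q ^ c < 1 := Real.rpow_lt_one hq0 hq1 hc
  have hqc0 : 0 < q ^ c := Real.rpow_pos_of_pos hq c
  have hqd1 : q ^ d < 1 := Real.rpow_lt_one hq0 hq1 hd
  have hqd0 : 0 < q ^ d := Real.rpow_pos_of_pos hq d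
  have hqe1 : q ^ (-e) < 1 := Real.rpow_lt_one hq0 hq1 (by linarith)
  have hqe0 : 0 < q ^ (-e) := Real.rpow_pos_of_pos hq (-e)
  have hA : 0 < (1 - q) / (1 - q ^ c) := div_pos h1q (by linarith)
  -- pointwise values
  have hterm : ∀ x : ℝ, 0 ≤ x →
      q ^ (x * (1 - α)) * f (q ^ x) = q ^ (x * c) := by
    intro x hx
    rw [hf _ (Real.rpow_pos_of_pos hq x),
      if_pos (Real.rpow_le_one hq0 hq1.le hx),
      ← Real.rpow_mul hq0, ← Real.rpow_add hq]
    congr 1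
    rw [hcdef]; ring
  have hzero : ∀ x : ℝ, x < 0 → f (q ^ x) = 0 := by
    intro x hx
    rw [hf _ (Real.rpow_pos_of_pos hq x), if_neg]
    simp only [not_le]
    exact (Real.one_lt_rpow_iff_of_pos hq).2 (Or.inr ⟨hq1, hx⟩)
  have hf_nonneg : ∀ t : ℝ, 0 < t → 0 ≤ f t := by
    intro t ht
    rw [hf t ht]
    split_ifs
    · exact Real.rpow_nonneg ht.le β
    · exact le_refl 0
  -- inner sums
  have hS_nonneg : ∀ n : ℕ,
      (∑' m : ℕ, q ^ (((n : ℝ) + (m : ℝ)) * (1 - α)) * f (q ^ ((n : ℝ) + (m : ℝ))))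
        = q ^ ((n : ℝ) * c) * (1 - q ^ c)⁻¹ := by
    intro n
    have key : ∀ m : ℕ,
        q ^ (((n : ℝ) + (m : ℝ)) * (1 - α)) * f (q ^ ((n : ℝ) + (m : ℝ)))
          = q ^ ((n : ℝ) * c) * (q ^ c) ^ m := by
      intro m
      have hcm : q ^ (c * (m : ℝ)) = (q ^ c) ^ m := by
        rw [Real.rpow_mul hq0, Real.rpow_natCast]
      rw [hterm _ (by positivity), show ((n : ℝ) + (m : ℝ)) * c = (n : ℝ) * c + c * (m : ℝ) by ring,
        Real.rpow_add hq, hcm]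
    rw [tsum_congr key, tsum_mul_left, tsum_geometric_of_lt_one hqc0.le hqc1]
  have hS_neg : ∀ k : ℕ,
      (∑' m : ℕ, q ^ ((-(k : ℝ) + (m : ℝ)) * (1 - α)) * f (q ^ (-(k : ℝ) + (m : ℝ))))
        = (1 - q ^ c)⁻¹ := by
    intro k
    have hinj : Function.Injective (fun i : ℕ => k + i) := add_right_injective k
    have hvanish : ∀ m : ℕ, m ∉ Set.range (fun i : ℕ => k + i) →
        q ^ ((-(k : ℝ) + (m : ℝ)) * (1 - α)) * f (q ^ (-(k : ℝ) + (m : ℝ))) = 0 := by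
      intro m hm
      have hmk : m < k := by
        by_contra h
        exact hm ⟨m - k, by show k + (m - k) = m; omega⟩
      have : (m : ℝ) < (k : ℝ) := Nat.cast_lt.2 hmk
      rw [hzero _ (by linarith), mul_zero]
    rw [← Function.Injective.tsum_eq hinj (Function.support_subset_iff'.2 hvanish)]
    have key : ∀ i : ℕ,
        (fun m : ℕ => q ^ ((-(k : ℝ) + (m : ℝ)) * (1 - α)) * f (q ^ (-(k : ℝ) + (m : ℝ))))
          ((fun i : ℕ => k + i) i) = (q ^ c) ^ i := by
      intro i
      simp only []
      have hx : -(k : ℝ) + ((k + i : ℕ) : ℝ) = (i : ℝ) := by push_cast; ring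
      have hci : q ^ (c * (i : ℝ)) = (q ^ c) ^ i := by
        rw [Real.rpow_mul hq0, Real.rpow_natCast]
      rw [hx, hterm _ (Nat.cast_nonneg i), show (i : ℝ) * c = c * (i : ℝ) by ring, hci]
    rw [tsum_congr key, tsum_geometric_of_lt_one hqc0.le hqc1]
  -- the summand over ℤ
  set F : ℤ → ℝ := fun j => q ^ ((j : ℝ) * e) *
      ((1 - q) * ∑' m : ℕ, q ^ (((j : ℝ) + (m : ℝ)) * (1 - α)) *
        f (q ^ ((j : ℝ) + (m : ℝ)))) ^ p with hFdef
  have hFnat : ∀ n : ℕ, F (n : ℤ) = ((1 - q) / (1 - q ^ c)) ^ p * (q ^ d) ^ n := by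
    intro n
    rw [hFdef]
    simp only [Int.cast_natCast]
    rw [hS_nonneg n]
    rw [show (1 - q) * (q ^ ((n : ℝ) * c) * (1 - q ^ c)⁻¹)
        = ((1 - q) / (1 - q ^ c)) * q ^ ((n : ℝ) * c) by ring,
      Real.mul_rpow hA.le (Real.rpow_nonneg hq0 _),
      ← Real.rpow_natCast (q ^ d) n, ← Real.rpow_mul hq0,
      ← Real.rpow_mul hq0, ← mul_assoc, mul_comm (q ^ ((n : ℝ) * e)), mul_assoc,
      ← Real.rpow_add hq]
    congr 2
    rw [hddef, hedef, hcdef]; ring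
  have hFneg : ∀ n : ℕ, F (-(n : ℤ)) = ((1 - q) / (1 - q ^ c)) ^ p * (q ^ (-e)) ^ n := by
    intro n
    rw [hFdef]
    simp only [Int.cast_neg, Int.cast_natCast]
    rw [hS_neg n]
    rw [show (1 - q) * (1 - q ^ c)⁻¹ = (1 - q) / (1 - q ^ c) by ring,
      ← Real.rpow_natCast (q ^ (-e)) n, ← Real.rpow_mul hq0, mul_comm]
    congr 2
    ring
  have hsum_nat : Summable (fun n : ℕ => F (n : ℤ)) := by
    apply Summable.congr (((summable_geometric_of_lt_one hqd0.le hqd1).mul_left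
      (((1 - q) / (1 - q ^ c)) ^ p)))
    intro n; exact (hFnat n).symm
  have hsum_neg : Summable (fun n : ℕ => F (-(n : ℤ))) := by
    apply Summable.congr (((summable_geometric_of_lt_one hqe0.le hqe1).mul_left
      (((1 - q) / (1 - q ^ c)) ^ p)))
    intro n; exact (hFneg n).symm
  have hsum : Summable F := Summable.of_nat_of_neg hsum_nat hsum_neg
  have hF_nonneg : ∀ j : ℤ, 0 ≤ F j := by
    intro j
    rw [hFdef]
    apply mul_nonneg (Real.rpow_nonneg hq0 _)
    apply Real.rpow_nonneg
    apply mul_nonneg h1q.le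
    apply tsum_nonneg
    intro m
    exact mul_nonneg (Real.rpow_nonneg hq0 _)
      (hf_nonneg _ (Real.rpow_pos_of_pos hq _))
  have hnat_tsum : ∑' n : ℕ, F (n : ℤ)
      = ((1 - q) / (1 - q ^ c)) ^ p * (1 - q ^ d)⁻¹ := by
    rw [tsum_congr hFnat, tsum_mul_left, tsum_geometric_of_lt_one hqd0.le hqd1]
  have hle : ∑' n : ℕ, F (n : ℤ) ≤ ∑' j : ℤ, F j :=
    Summable.tsum_le_tsum_of_inj (fun n : ℕ => (n : ℤ)) (fun a b h => Nat.cast_injective h)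
      (fun j _ => hF_nonneg j) (fun n => le_refl _) hsum_nat hsum
  calc ((1 - q) / (1 - q ^ c)) ^ p * ((1 - q) / (1 - q ^ d))
      = (1 - q) * (((1 - q) / (1 - q ^ c)) ^ p * (1 - q ^ d)⁻¹) := by ring
    _ = (1 - q) * ∑' n : ℕ, F (n : ℤ) := by rw [hnat_tsum]
    _ ≤ (1 - q) * ∑' j : ℤ, F j := by
        exact mul_le_mul_of_nonneg_left hle h1q.le
end

section
/- Let 0 < q < 1, 0 < p < 1, α < (p-1)/p, and γ = (p-1)/p - α. For α - 1 < β < -1/p and f_β(t) = t^β χ_{[1,∞)}(t), one has ∫_0^∞ f_β^p d_q t = (1-q)/(1 - q^{|1+pβ|}) and ∫_0^∞ x^{p(α-1)}(∫_0^x t^{-α} f_β d_q t)^p d_q x ≤ (1-q)/(1 - q^{|1+pβ|}) · ((1-q)/(1 - q^{1-α+β}))^p. -/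
open Function

lemma aux_geom_int_summable {r : ℝ} (h0 : 0 ≤ r) (h1 : r < 1) :
    Summable (fun j : ℤ => if j ≤ 0 then r ^ (-j).toNat else 0) := by
  have hi : Injective (fun n : ℕ => -(n : ℤ)) := fun a b h => by simpa using h
  have hr : ∀ j : ℤ, j ∉ Set.range (fun n : ℕ => -(n : ℤ)) →
      (if j ≤ 0 then r ^ (-j).toNat else 0) = 0 := by
    intro j hj
    rw [if_neg]
    intro hle
    exact hj ⟨(-j).toNat, by simp; omega⟩
  rw [← hi.summable_iff hr]
  have : (fun n : ℕ => (if (-(n:ℤ)) ≤ 0 then r ^ (-(-(n:ℤ))).toNat else 0)) = fun n : ℕ => r ^ n := by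
    funext n; simp
  rw [Function.comp_def, this]
  exact summable_geometric_of_lt_one h0 h1

lemma aux_geom_int_tsum {r : ℝ} (h0 : 0 ≤ r) (h1 : r < 1) :
    ∑' j : ℤ, (if j ≤ 0 then r ^ (-j).toNat else 0) = (1 - r)⁻¹ := by
  have hi : Injective (fun n : ℕ => -(n : ℤ)) := fun a b h => by simpa using h
  have hr : Function.support (fun j : ℤ => if j ≤ 0 then r ^ (-j).toNat else 0) ⊆
      Set.range (fun n : ℕ => -(n : ℤ)) := by
    intro j hj
    by_contra h
    apply hj
    have hj0 : ¬ j ≤ 0 := fun hle => h ⟨(-j).toNat, by simp; omega⟩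
    simp [hj0]
  rw [← hi.tsum_eq hr]
  have : (fun n : ℕ => (if (-(n:ℤ)) ≤ 0 then r ^ (-(-(n:ℤ))).toNat else 0)) = fun n : ℕ => r ^ n := by
    funext n; simp
  simp only [this]
  exact tsum_geometric_of_lt_one h0 h1

theorem test_function_reverse_case (q p α β : ℝ) (hq : 0 < q) (hq1 : q < 1)
    (hp0 : 0 < p) (hp1 : p < 1) (hα : α < (p - 1) / p)
    (hβ1 : α - 1 < β) (hβ2 : β < -1 / p) (f : ℝ → ℝ)
    (hf : ∀ t : ℝ, 0 < t → f t = if 1 ≤ t then t ^ β else 0) :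
    (1 - q) * ∑' k : ℤ, q ^ (k : ℝ) * (f (q ^ (k : ℝ))) ^ p
        = (1 - q) / (1 - q ^ |1 + p * β|) ∧
    (1 - q) * ∑' j : ℤ, q ^ ((j : ℝ) * (p * (α - 1) + 1)) *
        ((1 - q) * ∑' m : ℕ, q ^ (((j : ℝ) + (m : ℝ)) * (1 - α)) *
          f (q ^ ((j : ℝ) + (m : ℝ)))) ^ p
      ≤ (1 - q) / (1 - q ^ |1 + p * β|) * ((1 - q) / (1 - q ^ (1 - α + β))) ^ p := by
  have hpβ : p * β < -1 := by
    have h2 : β * p < -1 / p * p := mul_lt_mul_of_pos_right hβ2 hp0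
    rw [div_mul_cancel₀ _ hp0.ne'] at h2
    nlinarith [h2]
  have ha : 1 + p * β < 0 := by linarith
  have habs : |1 + p * β| = -(1 + p * β) := abs_of_neg ha
  have he : (0:ℝ) < 1 - α + β := by linarith
  have hs0 : (0:ℝ) < q ^ |1 + p * β| := Real.rpow_pos_of_pos hq _
  have hs1 : q ^ |1 + p * β| < 1 :=
    Real.rpow_lt_one hq.le hq1 (by rw [habs]; linarith)
  have hD0 : (0:ℝ) < q ^ (1 - α + β) := Real.rpow_pos_of_pos hq _
  have hD1 : q ^ (1 - α + β) < 1 := Real.rpow_lt_one hq.le hq1 he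
  have h1q : (0:ℝ) < 1 - q := by linarith
  have hDden : (0:ℝ) < 1 - q ^ (1 - α + β) := by linarith
  have hone : ∀ x : ℝ, (1 ≤ q ^ x) ↔ x ≤ 0 := by
    intro x
    rw [← Real.rpow_zero q, Real.rpow_le_rpow_left_iff_of_base_lt_one hq hq1]
  have hf_nonneg : ∀ t : ℝ, 0 < t → 0 ≤ f t := by
    intro t ht
    rw [hf t ht]
    split
    · positivity
    · exact le_refl 0
  constructor
  · -- first part
    have hterm : ∀ k : ℤ, q ^ (k:ℝ) * (f (q ^ (k:ℝ))) ^ p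
        = (if k ≤ 0 then (q ^ |1 + p * β|) ^ (-k).toNat else 0) := by
      intro k
      have hk0 : (0:ℝ) < q ^ (k:ℝ) := Real.rpow_pos_of_pos hq _
      rw [hf _ hk0]
      by_cases hk : k ≤ 0
      · rw [if_pos ((hone _).mpr (by exact_mod_cast hk)), if_pos hk]
        have hnk : (((-k).toNat : ℕ) : ℝ) = -(k:ℝ) := by
          have h := Int.toNat_of_nonneg (by omega : (0:ℤ) ≤ -k)
          exact_mod_cast congrArg (fun z : ℤ => (z : ℝ)) h
        rw [← Real.rpow_natCast (q ^ |1 + p * β|) ((-k).toNat), hnk,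
          ← Real.rpow_mul hq.le, ← Real.rpow_mul hq.le, ← Real.rpow_mul hq.le,
          ← Real.rpow_add hq]
        congr 1
        rw [habs]
        ring
      · have hcond : ¬ (1 ≤ q ^ (k:ℝ)) := by
          rw [hone]
          exact_mod_cast hk
        rw [if_neg hcond, if_neg hk, Real.zero_rpow hp0.ne', mul_zero]
    rw [tsum_congr hterm, aux_geom_int_tsum hs0.le hs1, div_eq_mul_inv]
  · -- second part
    set S : ℤ → ℝ := fun j => ∑' m : ℕ, q ^ (((j : ℝ) + (m : ℝ)) * (1 - α)) *
        f (q ^ ((j : ℝ) + (m : ℝ))) with hS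
    set C : ℝ := ((1 - q) / (1 - q ^ (1 - α + β))) ^ p with hCdef
    have hC0 : 0 ≤ C := Real.rpow_nonneg (div_nonneg h1q.le hDden.le) _
    have hS_nonneg : ∀ j : ℤ, 0 ≤ S j := by
      intro j
      apply tsum_nonneg
      intro m
      exact mul_nonneg (Real.rpow_pos_of_pos hq _).le
        (hf_nonneg _ (Real.rpow_pos_of_pos hq _))
    have hterm_nonneg : ∀ j : ℤ,
        0 ≤ q ^ ((j:ℝ) * (p * (α - 1) + 1)) * ((1 - q) * S j) ^ p := by
      intro j
      exact mul_nonneg (Real.rpow_pos_of_pos hq _).le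
        (Real.rpow_nonneg (mul_nonneg h1q.le (hS_nonneg j)) _)
    have hle : ∀ j : ℤ, q ^ ((j:ℝ) * (p * (α - 1) + 1)) * ((1 - q) * S j) ^ p
        ≤ (if j ≤ 0 then C * (q ^ |1 + p * β|) ^ (-j).toNat else 0) := by
      intro j
      by_cases hj : j ≤ 0
      · rw [if_pos hj]
        have hgm_sum : Summable (fun m : ℕ => q ^ ((j:ℝ) * (1 - α + β)) * (q ^ (1 - α + β)) ^ m) :=
          (summable_geometric_of_lt_one hD0.le hD1).mul_left _
        have hterm_le : ∀ m : ℕ, q ^ (((j : ℝ) + (m : ℝ)) * (1 - α)) * f (q ^ ((j : ℝ) + (m : ℝ)))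
            ≤ q ^ ((j:ℝ) * (1 - α + β)) * (q ^ (1 - α + β)) ^ m := by
          intro m
          have hrhs : q ^ ((j:ℝ) * (1 - α + β)) * (q ^ (1 - α + β)) ^ m
              = q ^ (((j:ℝ) + (m:ℝ)) * (1 - α + β)) := by
            rw [← Real.rpow_natCast (q ^ (1 - α + β)) m, ← Real.rpow_mul hq.le,
              ← Real.rpow_add hq]
            congr 1
            ring
          rw [hrhs, hf _ (Real.rpow_pos_of_pos hq _)]
          by_cases hc : (1:ℝ) ≤ q ^ ((j:ℝ) + (m:ℝ))
          · rw [if_pos hc, ← Real.rpow_mul hq.le, ← Real.rpow_add hq]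
            apply le_of_eq
            congr 1
            ring
          · rw [if_neg hc, mul_zero]
            positivity
        have hterm_nn : ∀ m : ℕ,
            0 ≤ q ^ (((j : ℝ) + (m : ℝ)) * (1 - α)) * f (q ^ ((j : ℝ) + (m : ℝ))) :=
          fun m => mul_nonneg (Real.rpow_pos_of_pos hq _).le
            (hf_nonneg _ (Real.rpow_pos_of_pos hq _))
        have hSle : S j ≤ q ^ ((j:ℝ) * (1 - α + β)) * (1 - q ^ (1 - α + β))⁻¹ := by
          have := Summable.tsum_le_tsum hterm_le
            (Summable.of_nonneg_of_le hterm_nn hterm_le hgm_sum) hgm_sum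
          rwa [tsum_mul_left, tsum_geometric_of_lt_one hD0.le hD1] at this
        have hmono : ((1 - q) * S j) ^ p
            ≤ ((1 - q) * (q ^ ((j:ℝ) * (1 - α + β)) * (1 - q ^ (1 - α + β))⁻¹)) ^ p :=
          Real.rpow_le_rpow (mul_nonneg h1q.le (hS_nonneg j))
            (mul_le_mul_of_nonneg_left hSle h1q.le) hp0.le
        calc q ^ ((j:ℝ) * (p * (α - 1) + 1)) * ((1 - q) * S j) ^ p
            ≤ q ^ ((j:ℝ) * (p * (α - 1) + 1)) *
              ((1 - q) * (q ^ ((j:ℝ) * (1 - α + β)) * (1 - q ^ (1 - α + β))⁻¹)) ^ p :=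
              mul_le_mul_of_nonneg_left hmono (Real.rpow_pos_of_pos hq _).le
          _ = C * (q ^ |1 + p * β|) ^ (-j).toNat := by
              have h1 : (1 - q) * (q ^ ((j:ℝ) * (1 - α + β)) * (1 - q ^ (1 - α + β))⁻¹)
                  = ((1 - q) / (1 - q ^ (1 - α + β))) * q ^ ((j:ℝ) * (1 - α + β)) := by
                ring
              rw [h1, Real.mul_rpow (div_nonneg h1q.le hDden.le)
                (Real.rpow_pos_of_pos hq _).le, ← hCdef]
              have hnk : (((-j).toNat : ℕ) : ℝ) = -(j:ℝ) := by
                have h := Int.toNat_of_nonneg (by omega : (0:ℤ) ≤ -j)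
                exact_mod_cast congrArg (fun z : ℤ => (z : ℝ)) h
              rw [← Real.rpow_natCast (q ^ |1 + p * β|) ((-j).toNat), hnk,
                ← Real.rpow_mul hq.le, ← Real.rpow_mul hq.le]
              rw [mul_left_comm]
              congr 1
              rw [← Real.rpow_add hq]
              congr 1
              rw [habs]
              ring
      · rw [if_neg hj]
        have hSj : S j = 0 := by
          rw [hS]
          have hzero : ∀ m : ℕ, q ^ (((j : ℝ) + (m : ℝ)) * (1 - α)) *
              f (q ^ ((j : ℝ) + (m : ℝ))) = 0 := by
            intro m
            have hc : ¬ (1:ℝ) ≤ q ^ ((j:ℝ) + (m:ℝ)) := by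
              rw [hone]
              push_neg
              have h1j : (1:ℝ) ≤ (j:ℝ) := by exact_mod_cast (by omega : (1:ℤ) ≤ j)
              have hm : (0:ℝ) ≤ (m:ℝ) := Nat.cast_nonneg m
              linarith
            rw [hf _ (Real.rpow_pos_of_pos hq _), if_neg hc, mul_zero]
          simp only [hzero, tsum_zero]
        rw [hSj, mul_zero, Real.zero_rpow hp0.ne', mul_zero]
    have hfun : (fun j : ℤ => if j ≤ 0 then C * (q ^ |1 + p * β|) ^ (-j).toNat else 0)
        = fun j : ℤ => C * (if j ≤ 0 then (q ^ |1 + p * β|) ^ (-j).toNat else 0) := by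
      funext j
      split <;> simp
    have hgs : Summable (fun j : ℤ => if j ≤ 0 then C * (q ^ |1 + p * β|) ^ (-j).toNat else 0) := by
      rw [hfun]
      exact (aux_geom_int_summable hs0.le hs1).mul_left C
    have hts : Summable (fun j : ℤ =>
        q ^ ((j:ℝ) * (p * (α - 1) + 1)) * ((1 - q) * S j) ^ p) :=
      Summable.of_nonneg_of_le hterm_nonneg hle hgs
    have hsum_le := Summable.tsum_le_tsum hle hts hgs
    have htg : ∑' j : ℤ, (if j ≤ 0 then C * (q ^ |1 + p * β|) ^ (-j).toNat else 0)
        = C * (1 - q ^ |1 + p * β|)⁻¹ := by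
      rw [hfun, tsum_mul_left, aux_geom_int_tsum hs0.le hs1]
    calc (1 - q) * ∑' j : ℤ, q ^ ((j:ℝ) * (p * (α - 1) + 1)) * ((1 - q) * S j) ^ p
        ≤ (1 - q) * (C * (1 - q ^ |1 + p * β|)⁻¹) := by
          rw [← htg]
          exact mul_le_mul_of_nonneg_left hsum_le h1q.le
      _ = (1 - q) / (1 - q ^ |1 + p * β|) * C := by ring
end
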